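/- arXiv:2006.13497 — 5 statements merged into one kernel-verified Lean document; each statement's English description precedes it below -/
import Mathlib

section
/- Let Λ ⊂ ℝ^d be a countable set and γ > 0. If the series ∑_{λ∈Λ\{0}} |λ|^{-γ} diverges, then γ ≤ dim⁺(Λ). -/
open MeasureTheory Filter Set
open scoped ENNReal RealInnerProductSpace ComplexConjugate Pointwise Topology

noncomputable section

/-- Cast an integer vector to a point of Euclidean space. -/
def intCast {d : ℕ} (v : Fin d → ℤ) : EuclideanSpace ℝ (Fin d) :=
  (WithLp.equiv 2 (Fin d → ℝ)).symm fun i => (v i : ℝ)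

/-- The real matrix obtained from an integer matrix. -/
def matR {d : ℕ} (R : Matrix (Fin d) (Fin d) ℤ) : Matrix (Fin d) (Fin d) ℝ :=
  R.map (Int.cast : ℤ → ℝ)

/-- Matrix action on Euclidean space. -/
def mulVecE {d : ℕ} (A : Matrix (Fin d) (Fin d) ℝ) (x : EuclideanSpace ℝ (Fin d)) :
    EuclideanSpace ℝ (Fin d) :=
  (WithLp.equiv 2 (Fin d → ℝ)).symm (A.mulVec ((WithLp.equiv 2 (Fin d → ℝ)) x))

/-- A matrix is expansive if all of its (complex) eigenvalues have modulus > 1. -/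
def IsExpansive {d : ℕ} (R : Matrix (Fin d) (Fin d) ℤ) : Prop :=
  ∀ z : ℂ, (R.map (Int.cast : ℤ → ℂ)).charpoly.IsRoot z → 1 < ‖z‖

/-- The matrix `H = (1/√q) (e^{-2πi ⟨R⁻¹ b, l⟩})_{b ∈ B, l ∈ L}`. -/
def hadamardMatrix {d : ℕ} (R : Matrix (Fin d) (Fin d) ℤ) (B L : Finset (Fin d → ℤ)) :
    Matrix {b // b ∈ B} {l // l ∈ L} ℂ :=
  fun b l =>
    ((1 / Real.sqrt (B.card) : ℝ) : ℂ) *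
      Complex.exp (((-(2 * Real.pi *
        (dotProduct ((matR R)⁻¹.mulVec (fun i => ((b : Fin d → ℤ) i : ℝ)))
          (fun i => ((l : Fin d → ℤ) i : ℝ)))) : ℝ) : ℂ) * Complex.I)

/-- `(R, B, L)` is a Hadamard triple: `#B = #L` and the matrix
`H = (1/√q) (e^{-2πi ⟨R⁻¹ b, l⟩})_{b ∈ B, l ∈ L}` is unitary (`H* H = I`). -/
def IsHadamardTriple {d : ℕ} (R : Matrix (Fin d) (Fin d) ℤ) (B L : Finset (Fin d → ℤ)) : Prop :=
  B.card = L.card ∧ Matrix.conjTranspose (hadamardMatrix R B L) * hadamardMatrix R B L = 1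

/-- The self-affine measure `μ(R,B)`: the (unique) Borel probability measure with
invariance `μ(E) = (1/#B) ∑_{b ∈ B} μ(τ_b⁻¹ E)` for `τ_b x = R⁻¹(x + b)`. -/
def IsSelfAffine {d : ℕ} (R : Matrix (Fin d) (Fin d) ℤ) (B : Finset (Fin d → ℤ))
    (μ : Measure (EuclideanSpace ℝ (Fin d))) : Prop :=
  IsProbabilityMeasure μ ∧
  ∀ E : Set (EuclideanSpace ℝ (Fin d)), MeasurableSet E →
    μ E = (B.card : ℝ≥0∞)⁻¹ *
      ∑ b ∈ B, μ ((fun x => mulVecE (matR R)⁻¹ (x + intCast b)) ⁻¹' E)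

/-- The Fourier transform `μ̂(ξ) = ∫ e^{-2πi⟨ξ,x⟩} dμ(x)` of a measure. -/
def muHat {d : ℕ} (μ : Measure (EuclideanSpace ℝ (Fin d))) (ξ : EuclideanSpace ℝ (Fin d)) : ℂ :=
  ∫ x, Complex.exp (((-(2 * Real.pi * (inner ℝ ξ x : ℝ)) : ℝ) : ℂ) * Complex.I) ∂μ

/-- The exponential function `e_l(x) = e^{2πi⟨l,x⟩}`. -/
def expFn {d : ℕ} (l x : EuclideanSpace ℝ (Fin d)) : ℂ :=
  Complex.exp (((2 * Real.pi * (inner ℝ l x : ℝ) : ℝ) : ℂ) * Complex.I)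

/-- `Λ` is a spectrum of `μ`: it is countable and `E(Λ) = {e^{2πi⟨λ,x⟩} : λ ∈ Λ}` is an
orthonormal basis of `L²(μ)` (i.e. an orthonormal family which is maximal). -/
def IsSpectrum {d : ℕ} (μ : Measure (EuclideanSpace ℝ (Fin d)))
    (Λ : Set (EuclideanSpace ℝ (Fin d))) : Prop :=
  Λ.Countable ∧
  (∀ l ∈ Λ, ∫ x, expFn l x * conj (expFn l x) ∂μ = 1) ∧
  (∀ l ∈ Λ, ∀ l' ∈ Λ, l ≠ l' → ∫ x, expFn l x * conj (expFn l' x) ∂μ = 0) ∧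
  (∀ f : Lp ℂ 2 μ, (∀ l ∈ Λ, ∫ x, f x * conj (expFn l x) ∂μ = 0) → f = 0)

/-- The cube `x + [-h,h]^d`. -/
def cube {d : ℕ} (x : EuclideanSpace ℝ (Fin d)) (h : ℝ) : Set (EuclideanSpace ℝ (Fin d)) :=
  {y | ∀ i, |y i - x i| ≤ h}

/-- The upper `r`-Beurling density
`D_r⁺(Λ) = limsup_{h→∞} sup_x #(Λ ∩ (x+[-h,h]^d))/h^r`. -/
def beurlingDensity {d : ℕ} (r : ℝ) (Λ : Set (EuclideanSpace ℝ (Fin d))) : ℝ≥0∞ :=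
  Filter.limsup (fun h : ℝ => ⨆ x : EuclideanSpace ℝ (Fin d),
    ((Λ ∩ cube x h).encard : ℝ≥0∞) / ENNReal.ofReal (h ^ r)) Filter.atTop

/-- The Beurling dimension `dim⁺(Λ) = sup {r > 0 : D_r⁺(Λ) > 0}`. -/
def beurlingDim {d : ℕ} (Λ : Set (EuclideanSpace ℝ (Fin d))) : ℝ≥0∞ :=
  ⨆ r ∈ {r : ℝ | 0 < r ∧ 0 < beurlingDensity r Λ}, ENNReal.ofReal r

/-- `Λ = {λ_n}` is `b`-lacunary: `λ_0 = 0`, `|λ_1| ≥ b` and `|λ_{n+1}| ≥ b|λ_n|` for `n ≥ 1`. -/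
def IsLacunary {d : ℕ} (b : ℝ) (Λ : Set (EuclideanSpace ℝ (Fin d))) : Prop :=
  ∃ f : ℕ → EuclideanSpace ℝ (Fin d), Λ = Set.range f ∧ f 0 = 0 ∧ b ≤ ‖f 1‖ ∧
    ∀ n, 1 ≤ n → b * ‖f n‖ ≤ ‖f (n + 1)‖

/-- The periodic zero set `Z(μ) = {ξ : μ̂(ξ+k) = 0 for all k ∈ ℤ^d}`. -/
def periodicZeroSet {d : ℕ} (μ : Measure (EuclideanSpace ℝ (Fin d))) :
    Set (EuclideanSpace ℝ (Fin d)) :=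
  {ξ | ∀ k : Fin d → ℤ, muHat μ (ξ + intCast k) = 0}

/-- `𝐁_n = B + R B + ⋯ + R^{n-1} B`, defined recursively. -/
def iterSum {d : ℕ} (R : Matrix (Fin d) (Fin d) ℤ) (B : Finset (Fin d → ℤ)) :
    ℕ → Finset (Fin d → ℤ)
  | 0 => {0}
  | n + 1 => B + (iterSum R B n).image fun v => R.mulVec v

end

/-!
If `dim⁺ Λ < r < γ`, then `D_r⁺(Λ) = 0`, so eventually `#(Λ ∩ B(0, h)) ≤ h ^ r`. Splitting
`Λ \ {0}` into a finite ball `‖λ‖ < H` and the dyadic shells `H 2ⁿ ≤ ‖λ‖ < H 2ⁿ⁺¹`, the shell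
`n` contributes at most `(H 2ⁿ⁺¹) ^ r (H 2ⁿ) ^ (-γ)`, a geometric sequence of ratio
`2 ^ (r - γ) < 1`, so the series converges.
-/

section DyadicSummation

variable {E : Type*} [SeminormedAddCommGroup E]

def dyadicShell (Λ : Set E) (H : ℝ) (n : ℕ) : Set E :=
  {x ∈ Λ | H * 2 ^ n ≤ ‖x‖ ∧ ‖x‖ < H * 2 ^ (n + 1)}

lemma subset_iUnion_dyadicShell (Λ : Set E) {H : ℝ} (hH : 0 < H) :
    {x ∈ Λ | H ≤ ‖x‖} ⊆ ⋃ n, dyadicShell Λ H n := by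
  rintro x ⟨hx, hHx⟩
  obtain ⟨n, hlow, hup⟩ := exists_nat_pow_near ((one_le_div hH).mpr hHx) one_lt_two
  rw [le_div_iff₀' hH] at hlow
  rw [div_lt_iff₀' hH] at hup
  exact mem_iUnion.mpr ⟨n, hx, hlow, hup⟩

lemma rpow_dyadic_mul_rpow_dyadic {H : ℝ} (hH : 0 < H) (r γ : ℝ) (n : ℕ) :
    (H * 2 ^ (n + 1)) ^ r * (H * 2 ^ n) ^ (-γ) = H ^ (r - γ) * 2 ^ r * (2 ^ (r - γ)) ^ n := by
  have hsplit : ∀ (m : ℕ) (s : ℝ), (H * 2 ^ m) ^ s = H ^ s * (2 : ℝ) ^ ((m : ℝ) * s) := by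
    intro m s
    rw [Real.mul_rpow hH.le (by positivity), ← Real.rpow_natCast 2 m,
      ← Real.rpow_mul zero_le_two]
  rw [hsplit, hsplit, ← Real.rpow_natCast, ← Real.rpow_mul zero_le_two, sub_eq_add_neg,
    Real.rpow_add hH]
  calc H ^ r * 2 ^ (((n + 1 : ℕ) : ℝ) * r) * (H ^ (-γ) * 2 ^ ((n : ℝ) * -γ))
      = H ^ r * H ^ (-γ) * 2 ^ (((n + 1 : ℕ) : ℝ) * r + (n : ℝ) * -γ) := by
        rw [Real.rpow_add two_pos]; ring
    _ = H ^ r * H ^ (-γ) * 2 ^ (r + (r + -γ) * n) := by push_cast; ring_nf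
    _ = _ := by rw [Real.rpow_add two_pos]; ring

lemma tsum_dyadicShell_le {Λ : Set E} {γ r H : ℝ} (hγ : 0 ≤ γ) (hH : 0 < H) (n : ℕ)
    (hcount : ((Λ ∩ Metric.closedBall 0 (H * 2 ^ (n + 1))).encard : ℝ≥0∞) ≤
      ENNReal.ofReal ((H * 2 ^ (n + 1)) ^ r)) :
    ∑' x : dyadicShell Λ H n, ENNReal.ofReal (‖(x : E)‖ ^ (-γ)) ≤
      ENNReal.ofReal ((H * 2 ^ (n + 1)) ^ r * (H * 2 ^ n) ^ (-γ)) := by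
  have hterm : ∀ x : dyadicShell Λ H n,
      ENNReal.ofReal (‖(x : E)‖ ^ (-γ)) ≤ ENNReal.ofReal ((H * 2 ^ n) ^ (-γ)) := fun x =>
    ENNReal.ofReal_le_ofReal
      (Real.rpow_le_rpow_of_nonpos (by positivity) x.2.2.1 (neg_nonpos.mpr hγ))
  have hshell : dyadicShell Λ H n ⊆ Λ ∩ Metric.closedBall 0 (H * 2 ^ (n + 1)) :=
    fun x hx => ⟨hx.1, mem_closedBall_zero_iff.mpr hx.2.2.le⟩
  calc ∑' x : dyadicShell Λ H n, ENNReal.ofReal (‖(x : E)‖ ^ (-γ))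
      ≤ ∑' _ : dyadicShell Λ H n, ENNReal.ofReal ((H * 2 ^ n) ^ (-γ)) :=
        ENNReal.tsum_le_tsum hterm
    _ = (dyadicShell Λ H n).encard * ENNReal.ofReal ((H * 2 ^ n) ^ (-γ)) :=
        ENNReal.tsum_set_const _ _
    _ ≤ ENNReal.ofReal ((H * 2 ^ (n + 1)) ^ r) * ENNReal.ofReal ((H * 2 ^ n) ^ (-γ)) := by
        gcongr
        exact (ENat.toENNReal_le.mpr (encard_mono hshell)).trans hcount
    _ = _ := (ENNReal.ofReal_mul (by positivity)).symm

theorem summable_rpow_neg_norm_of_encard_closedBall_le (Λ : Set E) {γ r H : ℝ} (hγ : 0 ≤ γ)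
    (hrγ : r < γ) (hH : 0 < H)
    (hcount : ∀ h ≥ H, ((Λ ∩ Metric.closedBall 0 h).encard : ℝ≥0∞) ≤ ENNReal.ofReal (h ^ r)) :
    Summable (fun x : ↥(Λ \ {0}) => ‖(x : E)‖ ^ (-γ)) := by
  set f : E → ℝ≥0∞ := fun x => ENNReal.ofReal (‖x‖ ^ (-γ))
  have hinner : {x ∈ Λ | ‖x‖ < H}.Finite := by
    have hsub : {x ∈ Λ | ‖x‖ < H} ⊆ Λ ∩ Metric.closedBall 0 H :=
      fun x hx => ⟨hx.1, mem_closedBall_zero_iff.mpr hx.2.le⟩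
    refine (encard_ne_top_iff.mp ?_).subset hsub
    exact ENat.toENNReal_ne_top.mp (ne_top_of_le_ne_top ENNReal.ofReal_ne_top (hcount H le_rfl))
  have hcover : Λ \ {0} ⊆ {x ∈ Λ | ‖x‖ < H} ∪ ⋃ n, dyadicShell Λ H n := by
    rintro x ⟨hx, -⟩
    rcases lt_or_ge ‖x‖ H with hlt | hge
    · exact Or.inl ⟨hx, hlt⟩
    · exact Or.inr (subset_iUnion_dyadicShell Λ hH ⟨hx, hge⟩)
  have hgeom : Summable fun n : ℕ => (H * 2 ^ (n + 1)) ^ r * (H * 2 ^ n) ^ (-γ) := by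
    simp_rw [rpow_dyadic_mul_rpow_dyadic hH]
    exact (summable_geometric_of_lt_one (by positivity)
      (Real.rpow_lt_one_of_one_lt_of_neg one_lt_two (sub_neg.mpr hrγ))).mul_left _
  have hfin : ∑' x : ↥(Λ \ {0}), f x < ⊤ := by
    have hshells : ∑' n, ∑' x : dyadicShell Λ H n, f x ≠ ⊤ :=
      ne_top_of_le_ne_top hgeom.tsum_ofReal_ne_top <| ENNReal.tsum_le_tsum fun n =>
        tsum_dyadicShell_le hγ hH n
          (hcount _ (le_mul_of_one_le_right hH.le (one_le_pow₀ one_le_two)))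
    have hball : ∑' x : {x ∈ Λ | ‖x‖ < H}, f x ≠ ⊤ := by
      have := hinner.fintype
      rw [tsum_fintype]
      exact ENNReal.sum_ne_top.mpr fun _ _ => ENNReal.ofReal_ne_top
    calc ∑' x : ↥(Λ \ {0}), f x
        ≤ ∑' x : ↥({x ∈ Λ | ‖x‖ < H} ∪ ⋃ n, dyadicShell Λ H n), f x :=
          ENNReal.tsum_mono_subtype f hcover
      _ ≤ ∑' x : {x ∈ Λ | ‖x‖ < H}, f x + ∑' x : ↥(⋃ n, dyadicShell Λ H n), f x :=
          ENNReal.tsum_union_le f _ _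
      _ ≤ ∑' x : {x ∈ Λ | ‖x‖ < H}, f x + ∑' n, ∑' x : dyadicShell Λ H n, f x := by
          gcongr; exact ENNReal.tsum_iUnion_le_tsum f _
      _ < ⊤ := ENNReal.add_lt_top.mpr ⟨hball.lt_top, hshells.lt_top⟩
  exact (ENNReal.summable_toReal hfin.ne).congr fun x =>
    ENNReal.toReal_ofReal (Real.rpow_nonneg (norm_nonneg _) _)

end DyadicSummation

section Beurling

variable {d : ℕ}

lemma closedBall_subset_cube (x : EuclideanSpace ℝ (Fin d)) (h : ℝ) :
    Metric.closedBall x h ⊆ cube x h := fun y hy i => by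
  simpa only [← dist_eq_norm, Real.dist_eq, PiLp.sub_apply] using
    (PiLp.norm_apply_le (y - x) i).trans (mem_closedBall_iff_norm.mp hy)

lemma beurlingDensity_eq_zero_of_beurlingDim_lt {Λ : Set (EuclideanSpace ℝ (Fin d))}
    {r : ℝ} (hr : 0 < r) (hlt : beurlingDim Λ < ENNReal.ofReal r) : beurlingDensity r Λ = 0 := by
  by_contra hpos
  exact hlt.not_ge (le_biSup (fun s => ENNReal.ofReal s) ⟨hr, pos_iff_ne_zero.mpr hpos⟩)

lemma exists_encard_inter_cube_le_of_beurlingDensity_lt_one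
    {Λ : Set (EuclideanSpace ℝ (Fin d))} {r : ℝ} (hlt : beurlingDensity r Λ < 1) :
    ∃ H > 0, ∀ h ≥ H, ∀ x, ((Λ ∩ cube x h).encard : ℝ≥0∞) ≤ ENNReal.ofReal (h ^ r) := by
  obtain ⟨H₀, hH₀⟩ := eventually_atTop.mp (eventually_lt_of_limsup_lt hlt)
  refine ⟨max H₀ 1, by positivity, fun h hh x => ?_⟩
  have hpos : ENNReal.ofReal (h ^ r) ≠ 0 :=
    (ENNReal.ofReal_pos.mpr (Real.rpow_pos_of_pos (by linarith [le_max_right H₀ 1]) r)).ne'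
  have hx := (le_iSup (fun x => ((Λ ∩ cube x h).encard : ℝ≥0∞) / ENNReal.ofReal (h ^ r)) x
    ).trans_lt (hH₀ h ((le_max_left _ _).trans hh))
  simpa using ((ENNReal.div_lt_iff (Or.inl hpos) (Or.inl ENNReal.ofReal_ne_top)).mp hx).le

end Beurling

theorem divergent_series_le_beurlingDim_general
    {d : ℕ} (Λ : Set (EuclideanSpace ℝ (Fin d)))
    (γ : ℝ)
    (hdiv : ¬ Summable (fun l : ↥(Λ \ {0}) => ‖(l : EuclideanSpace ℝ (Fin d))‖ ^ (-γ))) :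
    ENNReal.ofReal γ ≤ beurlingDim Λ := by
  by_contra! hlt
  obtain ⟨r, hr0, hdimr, hrγ'⟩ := ENNReal.lt_iff_exists_real_btwn.mp hlt
  have hr : 0 < r := ENNReal.ofReal_pos.mp (hdimr.trans_le' bot_le)
  have hrγ : r < γ := (ENNReal.ofReal_lt_ofReal_iff_of_nonneg hr0).mp hrγ'
  obtain ⟨H, hH, hcount⟩ := exists_encard_inter_cube_le_of_beurlingDensity_lt_one
    ((beurlingDensity_eq_zero_of_beurlingDim_lt hr hdimr).trans_lt zero_lt_one)
  refine hdiv (summable_rpow_neg_norm_of_encard_closedBall_le Λ (hr.le.trans hrγ.le) hrγ hH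
    fun h hh => le_trans ?_ (hcount h hh 0))
  exact ENat.toENNReal_le.mpr
    (encard_mono (inter_subset_inter_right _ (closedBall_subset_cube 0 h)))

/-- If `∑_{λ ∈ Λ \ {0}} |λ|^{-γ}` diverges, then `γ ≤ dim⁺(Λ)`. -/
theorem divergent_series_le_beurlingDim
    {d : ℕ} (Λ : Set (EuclideanSpace ℝ (Fin d))) (hΛ : Λ.Countable)
    (γ : ℝ) (hγ : 0 < γ)
    (hdiv : ¬ Summable (fun l : ↥(Λ \ {0}) => ‖(l : EuclideanSpace ℝ (Fin d))‖ ^ (-γ))) :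
    ENNReal.ofReal γ ≤ beurlingDim Λ :=
  divergent_series_le_beurlingDim_general Λ γ hdiv
end

section
/- Let R be an invertible matrix in M_d(ℝ) and let Λ ⊂ ℝ^d be a countable discrete set. Then dim⁺(Λ) = dim⁺(RΛ), where RΛ = {Rλ : λ ∈ Λ}. -/
open MeasureTheory Filter Set
open scoped ENNReal RealInnerProductSpace ComplexConjugate Pointwise Topology

/-! If an injective map `f` sends every cube `x + [-h,h]^d` into `f x + [-Ch,Ch]^d`, then each
cube of size `h` meeting `Λ` in `n` points yields a cube of size `Ch` meeting `fΛ` in at least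
`n` points, so `D_r⁺(Λ) ≤ C^r D_r⁺(fΛ)`: positive `r`-densities survive and `dim⁺` can only grow.
Both `R` and `R⁻¹` are Lipschitz for the sup norm, which gives the two inequalities. -/

section CubeExpanding

variable {d : ℕ} {f : EuclideanSpace ℝ (Fin d) → EuclideanSpace ℝ (Fin d)} {C : ℝ}

theorem encard_inter_cube_le_image (hf : Function.Injective f)
    {x : EuclideanSpace ℝ (Fin d)} {h : ℝ} (hmaps : MapsTo f (cube x h) (cube (f x) (C * h)))
    (Λ : Set (EuclideanSpace ℝ (Fin d))) :
    (Λ ∩ cube x h).encard ≤ (f '' Λ ∩ cube (f x) (C * h)).encard := by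
  rw [← hf.injOn.encard_image]
  exact encard_le_encard (image_inter_subset f Λ _ |>.trans
    (inter_subset_inter_right _ (image_subset_iff.mpr hmaps)))

theorem iSup_encard_inter_cube_div_le_image (hf : Function.Injective f) (hC : 0 < C)
    {h : ℝ} (hh : 0 < h) (hmaps : ∀ x, MapsTo f (cube x h) (cube (f x) (C * h)))
    (r : ℝ) (Λ : Set (EuclideanSpace ℝ (Fin d))) :
    ⨆ x, ((Λ ∩ cube x h).encard : ℝ≥0∞) / ENNReal.ofReal (h ^ r) ≤
      ENNReal.ofReal (C ^ r) *
        ⨆ y, ((f '' Λ ∩ cube y (C * h)).encard : ℝ≥0∞) / ENNReal.ofReal ((C * h) ^ r) := by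
  have hCr : 0 < C ^ r := Real.rpow_pos_of_pos hC r
  have hc₀ : ENNReal.ofReal (C ^ r) ≠ 0 := (ENNReal.ofReal_pos.mpr hCr).ne'
  refine iSup_le fun x => ?_
  calc ((Λ ∩ cube x h).encard : ℝ≥0∞) / ENNReal.ofReal (h ^ r)
      ≤ ((f '' Λ ∩ cube (f x) (C * h)).encard : ℝ≥0∞) / ENNReal.ofReal (h ^ r) :=
        ENNReal.div_le_div_right
          (ENat.toENNReal_le.mpr (encard_inter_cube_le_image hf (hmaps x) Λ)) _
    _ = ENNReal.ofReal (C ^ r) *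
          (((f '' Λ ∩ cube (f x) (C * h)).encard : ℝ≥0∞) / ENNReal.ofReal ((C * h) ^ r)) := by
        rw [Real.mul_rpow hC.le hh.le, ENNReal.ofReal_mul hCr.le, ← mul_div_assoc,
          ENNReal.mul_div_mul_left _ _ hc₀ ENNReal.ofReal_ne_top]
    _ ≤ _ := by
        gcongr
        exact le_iSup (fun y => ((f '' Λ ∩ cube y (C * h)).encard : ℝ≥0∞) /
          ENNReal.ofReal ((C * h) ^ r)) (f x)

theorem beurlingDensity_le_mul_image (hf : Function.Injective f) (hC : 0 < C)
    (hmaps : ∀ x h, 0 < h → MapsTo f (cube x h) (cube (f x) (C * h)))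
    (r : ℝ) (Λ : Set (EuclideanSpace ℝ (Fin d))) :
    beurlingDensity r Λ ≤ ENNReal.ofReal (C ^ r) * beurlingDensity r (f '' Λ) := by
  set G : ℝ → ℝ≥0∞ := fun h => ⨆ y, ((f '' Λ ∩ cube y h).encard : ℝ≥0∞) / ENNReal.ofReal (h ^ r)
  have hscale : Tendsto (fun h : ℝ => C * h) atTop atTop := tendsto_id.const_mul_atTop hC
  calc beurlingDensity r Λ ≤ limsup (fun h => ENNReal.ofReal (C ^ r) * G (C * h)) atTop := by
        refine limsup_le_limsup ?_ isCobounded_le_of_bot isBounded_le_of_top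
        filter_upwards [eventually_gt_atTop 0] with h hh
        exact iSup_encard_inter_cube_div_le_image hf hC hh (hmaps · h hh) r Λ
    _ = ENNReal.ofReal (C ^ r) * limsup (fun h => G (C * h)) atTop :=
        ENNReal.limsup_const_mul_of_ne_top ENNReal.ofReal_ne_top
    _ ≤ ENNReal.ofReal (C ^ r) * limsup G atTop := by
        gcongr
        exact (limsup_comp G _ _).trans_le (limsup_le_limsup_of_le hscale)

theorem beurlingDensity_image_pos (hf : Function.Injective f) (hC : 0 < C)
    (hmaps : ∀ x h, 0 < h → MapsTo f (cube x h) (cube (f x) (C * h)))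
    {r : ℝ} {Λ : Set (EuclideanSpace ℝ (Fin d))} (hΛ : 0 < beurlingDensity r Λ) :
    0 < beurlingDensity r (f '' Λ) := by
  have := hΛ.trans_le (beurlingDensity_le_mul_image hf hC hmaps r Λ)
  exact pos_of_ne_zero (right_ne_zero_of_mul this.ne')

theorem beurlingDim_le_image (hf : Function.Injective f) (hC : 0 < C)
    (hmaps : ∀ x h, 0 < h → MapsTo f (cube x h) (cube (f x) (C * h)))
    (Λ : Set (EuclideanSpace ℝ (Fin d))) :
    beurlingDim Λ ≤ beurlingDim (f '' Λ) :=
  iSup₂_le fun r hr =>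
    le_iSup₂_of_le (f := fun r (_ : r ∈ {r : ℝ | 0 < r ∧ 0 < beurlingDensity r (f '' Λ)}) =>
      ENNReal.ofReal r) r ⟨hr.1, beurlingDensity_image_pos hf hC hmaps hr.2⟩ le_rfl

end CubeExpanding

section MulVecE

variable {d : ℕ}

theorem mulVecE_apply (A : Matrix (Fin d) (Fin d) ℝ) (x : EuclideanSpace ℝ (Fin d)) (i : Fin d) :
    mulVecE A x i = ∑ j, A i j * x j :=
  rfl

theorem mulVecE_mulVecE (A B : Matrix (Fin d) (Fin d) ℝ) (x : EuclideanSpace ℝ (Fin d)) :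
    mulVecE A (mulVecE B x) = mulVecE (A * B) x := by
  simp [mulVecE, Matrix.mulVec_mulVec]

theorem mulVecE_nonsing_inv_mulVecE {R : Matrix (Fin d) (Fin d) ℝ} (hR : R.det ≠ 0)
    (x : EuclideanSpace ℝ (Fin d)) : mulVecE R⁻¹ (mulVecE R x) = x := by
  rw [mulVecE_mulVecE, Matrix.nonsing_inv_mul _ hR.isUnit]
  simp [mulVecE]

theorem mulVecE_injective {R : Matrix (Fin d) (Fin d) ℝ} (hR : R.det ≠ 0) :
    Function.Injective (mulVecE R) :=
  Function.LeftInverse.injective (mulVecE_nonsing_inv_mulVecE hR)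

theorem mapsTo_mulVecE_cube (A : Matrix (Fin d) (Fin d) ℝ) (x : EuclideanSpace ℝ (Fin d))
    {h : ℝ} (hh : 0 ≤ h) :
    MapsTo (mulVecE A) (cube x h) (cube (mulVecE A x) ((1 + ∑ i, ∑ j, |A i j|) * h)) := by
  intro y hy i
  have hrow : ∑ j, |A i j| ≤ 1 + ∑ i, ∑ j, |A i j| := by
    linarith [Finset.single_le_sum (f := fun i => ∑ j, |A i j|)
      (fun _ _ => Finset.sum_nonneg fun _ _ => abs_nonneg _) (Finset.mem_univ i)]
  calc |mulVecE A y i - mulVecE A x i| = |∑ j, A i j * (y j - x j)| := by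
        simp only [mulVecE_apply, mul_sub, Finset.sum_sub_distrib]
    _ ≤ ∑ j, |A i j| * |y j - x j| := by
        simpa only [abs_mul] using Finset.abs_sum_le_sum_abs (fun j => A i j * (y j - x j)) _
    _ ≤ ∑ j, |A i j| * h := by gcongr with j; exact hy j
    _ = (∑ j, |A i j|) * h := (Finset.sum_mul _ _ _).symm
    _ ≤ (1 + ∑ i, ∑ j, |A i j|) * h := by gcongr

theorem beurlingDim_le_mulVecE_image {R : Matrix (Fin d) (Fin d) ℝ} (hR : R.det ≠ 0)
    (Λ : Set (EuclideanSpace ℝ (Fin d))) :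
    beurlingDim Λ ≤ beurlingDim (mulVecE R '' Λ) :=
  beurlingDim_le_image (mulVecE_injective hR) (by positivity)
    (fun x _ hh => mapsTo_mulVecE_cube R x hh.le) Λ

end MulVecE

theorem beurlingDim_image_invertible_matrix_general
    {d : ℕ} (R : Matrix (Fin d) (Fin d) ℝ) (hR : R.det ≠ 0)
    (Λ : Set (EuclideanSpace ℝ (Fin d))) :
    beurlingDim Λ = beurlingDim (mulVecE R '' Λ) := by
  refine le_antisymm (beurlingDim_le_mulVecE_image hR Λ) ?_
  have hRinv : R⁻¹.det ≠ 0 := by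
    simpa [Matrix.det_nonsing_inv] using hR
  have hback : mulVecE R⁻¹ '' (mulVecE R '' Λ) = Λ := by
    simp [image_image, mulVecE_nonsing_inv_mulVecE hR]
  simpa only [hback] using beurlingDim_le_mulVecE_image hRinv (mulVecE R '' Λ)

/-- Beurling dimension is invariant under an invertible linear map:
`dim⁺(Λ) = dim⁺(RΛ)`. -/
theorem beurlingDim_image_invertible_matrix
    {d : ℕ} (R : Matrix (Fin d) (Fin d) ℝ) (hR : R.det ≠ 0)
    (Λ : Set (EuclideanSpace ℝ (Fin d))) (hΛ : Λ.Countable) :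
    beurlingDim Λ = beurlingDim (mulVecE R '' Λ) :=
  beurlingDim_image_invertible_matrix_general R hR Λ
end

section
/- Let μ be a Borel probability measure on ℝ^d whose periodic zero set Z(μ) is empty. Then there exist ε > 0 and δ > 0 such that for every ξ ∈ [0,1]^d there exists k_ξ ∈ ℤ^d with |μ̂(ξ + y + k_ξ)| ≥ ε whenever |y| < δ; moreover, for ξ = 0 one can take k_0 = 0. -/
open MeasureTheory Filter Set
open scoped ENNReal RealInnerProductSpace ComplexConjugate Pointwise Topology

/-!
Since `Z(μ) = ∅`, each `ξ` has a `k` with `μ̂(ξ + k) ≠ 0`, and by continuity of `μ̂` this translate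
stays bounded away from zero near `ξ`. Compactness of `[0,1]^d` turns these local bounds into a
uniform `ε`, and a Lebesgue number of the resulting open cover gives `δ`. At `ξ = 0` the choice
`k = 0` works because `μ̂(0) = 1`.
-/

theorem muHat_eq_charFun {d : ℕ} (μ : Measure (EuclideanSpace ℝ (Fin d)))
    (ξ : EuclideanSpace ℝ (Fin d)) : muHat μ ξ = charFun μ (-(2 * Real.pi) • ξ) := by
  simp only [muHat, charFun_apply, inner_smul_right, real_inner_comm ξ]
  congr! 3
  push_cast
  ring

theorem continuous_muHat {d : ℕ} (μ : Measure (EuclideanSpace ℝ (Fin d))) [IsFiniteMeasure μ] :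
    Continuous (muHat μ) := by
  rw [funext (muHat_eq_charFun μ)]
  fun_prop

theorem muHat_zero {d : ℕ} (μ : Measure (EuclideanSpace ℝ (Fin d))) [IsProbabilityMeasure μ] :
    muHat μ 0 = 1 := by
  simp [muHat_eq_charFun]

@[simp]
theorem intCast_zero {d : ℕ} : intCast (0 : Fin d → ℤ) = 0 := by
  ext
  simp [intCast]

theorem EuclideanSpace.isCompact_setOf_forall_mem_Icc {ι : Type*} [Fintype ι] (a b : ι → ℝ) :
    IsCompact {x : EuclideanSpace ℝ ι | ∀ i, x i ∈ Icc (a i) (b i)} := by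
  have : {x : EuclideanSpace ℝ ι | ∀ i, x i ∈ Icc (a i) (b i)} =
      EuclideanSpace.equiv ι ℝ ⁻¹' univ.pi fun i => Icc (a i) (b i) := by
    ext x
    simp only [mem_ofPred_eq, mem_preimage, mem_univ_pi]
    rfl
  rw [this]
  exact (EuclideanSpace.equiv ι ℝ).toHomeomorph.isCompact_preimage.2
    (isCompact_univ_pi fun _ => isCompact_Icc)

theorem IsCompact.exists_pos_subset_iUnion_lt {X ι : Type*} [TopologicalSpace X] {K : Set X}
    (hK : IsCompact K) {g : ι → X → ℝ} (hg : ∀ i, LowerSemicontinuous (g i))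
    (hpos : ∀ x ∈ K, ∃ i, 0 < g i x) : ∃ ε > 0, K ⊆ ⋃ i, {y | ε < g i y} := by
  obtain ⟨n, hn⟩ := hK.elim_directed_cover (fun n : ℕ => ⋃ i, {y | 1 / ((n : ℝ) + 1) < g i y})
    (fun n => isOpen_iUnion fun i => (hg i).isOpen_preimage _)
    (fun x hx => by
      obtain ⟨i, hi⟩ := hpos x hx
      obtain ⟨n, hn⟩ := exists_nat_one_div_lt hi
      exact mem_iUnion.2 ⟨n, mem_iUnion.2 ⟨i, hn⟩⟩)
    (Monotone.directed_le fun m n hmn => iUnion_mono fun i =>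
      ofPred_subset_ofPred.2 fun y hy => (Nat.one_div_le_one_div hmn).trans_lt hy)
  exact ⟨_, Nat.one_div_pos_of_nat, hn⟩

theorem IsCompact.exists_forall_ball_lt {X ι : Type*} [PseudoMetricSpace X] {K : Set X}
    (hK : IsCompact K) {g : ι → X → ℝ} (hg : ∀ i, LowerSemicontinuous (g i))
    (hpos : ∀ x ∈ K, ∃ i, 0 < g i x) :
    ∃ ε > 0, ∃ δ > 0, ∀ x ∈ K, ∃ i, ∀ y ∈ Metric.ball x δ, ε < g i y := by
  obtain ⟨ε, hε, hcover⟩ := hK.exists_pos_subset_iUnion_lt hg hpos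
  obtain ⟨δ, hδ, hball⟩ :=
    lebesgue_number_lemma_of_metric hK (fun i => (hg i).isOpen_preimage ε) hcover
  exact ⟨ε, hε, δ, hδ, hball⟩

/-- If the periodic zero set of a probability measure `μ` is empty, then
there are `ε, δ > 0` such that for every `ξ ∈ [0,1]^d` there is `k_ξ ∈ ℤ^d` (with `k_0 = 0`)
such that `|μ̂(ξ + y + k_ξ)| ≥ ε` whenever `|y| < δ`. -/
theorem equi_positive_of_empty_periodic_zero_set
    {d : ℕ} (μ : MeasureTheory.Measure (EuclideanSpace ℝ (Fin d)))
    (hprob : MeasureTheory.IsProbabilityMeasure μ)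
    (hZ : periodicZeroSet μ = ∅) :
    ∃ ε : ℝ, 0 < ε ∧ ∃ δ : ℝ, 0 < δ ∧
      ∃ k : EuclideanSpace ℝ (Fin d) → (Fin d → ℤ), k 0 = 0 ∧
        ∀ ξ : EuclideanSpace ℝ (Fin d), (∀ i, 0 ≤ ξ i ∧ ξ i ≤ 1) →
          ∀ y : EuclideanSpace ℝ (Fin d), ‖y‖ < δ →
            ε ≤ ‖muHat μ (ξ + y + intCast (k ξ))‖ := by
  have hcont := continuous_muHat μ
  have hpos (ξ : EuclideanSpace ℝ (Fin d)) : ∃ k : Fin d → ℤ, 0 < ‖muHat μ (ξ + intCast k)‖ := by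
    have hξ : ξ ∉ periodicZeroSet μ := hZ ▸ notMem_empty ξ
    simpa [periodicZeroSet] using hξ
  obtain ⟨ε, hε, δ, hδ, hball⟩ :=
    (EuclideanSpace.isCompact_setOf_forall_mem_Icc (fun _ => 0) fun _ => 1).exists_forall_ball_lt
      (fun k => (hcont.comp (continuous_add_const (intCast k))).norm.lowerSemicontinuous)
      fun ξ _ => hpos ξ
  choose! k hk using hball
  obtain ⟨δ₀, hδ₀, hball₀⟩ := Metric.eventually_nhds_iff.1 <|
    (hcont.norm.tendsto 0).eventually_const_lt (show (1 / 2 : ℝ) < ‖muHat μ 0‖ by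
      norm_num [muHat_zero])
  refine ⟨min ε (1 / 2), by positivity, min δ δ₀, lt_min hδ hδ₀, Function.update k 0 0,
    Function.update_self .., fun ξ hξ y hy => ?_⟩
  rcases eq_or_ne ξ 0 with rfl | hξ₀
  · have hy₀ : dist y 0 < δ₀ := by simpa using hy.trans_le (min_le_right _ _)
    simpa using (min_le_right _ _).trans (hball₀ hy₀).le
  · rw [Function.update_of_ne hξ₀]
    refine (min_le_left _ _).trans (hk ξ hξ (ξ + y) ?_).le
    simpa using hy.trans_le (min_le_left _ _)
end

section
/- Suppose (R, B, L) forms a Hadamard triple on ℝ^d. Then for every n ≥ 1, the triple (Rⁿ, 𝐁_n, 𝐋_n) is also a Hadamard triple, where 𝐁_n = B + RB + ⋯ + R^{n-1}B and 𝐋_n = L + RᵗL + ⋯ + (Rᵗ)^{n-1}L. -/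
open MeasureTheory Filter Set
open scoped ENNReal RealInnerProductSpace ComplexConjugate Pointwise Topology

/-!
Write `m_B(ξ) = ∑_{b ∈ B} e^{2πi⟨ξ, b⟩}`; then `(R, B, L)` is a Hadamard triple iff `#B = #L` and
`m_B(R⁻ᵀ(l - l')) = 0` for distinct `l, l' ∈ L`. Since a square matrix with orthonormal columns has
orthonormal rows, `(Rᵀ, L, B)` is then a Hadamard triple too, so distinct elements of `B` are
incongruent modulo `Rℤ^d`; in particular the sums `B₁ + R₁B₂` below are direct.

Hadamard triples compose: `(R₁R₂, B₁ + R₁B₂, L₂ + R₂ᵀL₁)` is again one. Indeed the mask of the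
direct sum factors as `m_{B₁}(ξ) · m_{B₂}(R₁ᵀξ)`, and for `ξ = (R₁R₂)⁻ᵀ(l₂ - l₂' + R₂ᵀ(l₁ - l₁'))`
the `ℤ^d`-periodicity of `m_{B₂}` reduces the second factor to `m_{B₂}(R₂⁻ᵀ(l₂ - l₂'))`. This
vanishes unless `l₂ = l₂'`, and then the first factor is `m_{B₁}(R₁⁻ᵀ(l₁ - l₁'))`. Composing
`(R, B, L)` with `(Rⁿ, 𝐁_n, 𝐋_n)` gives the induction step.
-/

open Matrix Finset FourierTransform

section HadamardTriple

variable {d : ℕ}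

def castVec : (Fin d → ℤ) →+ (Fin d → ℝ) := (Int.castAddHom ℝ).compLeft (Fin d)

lemma castVec_mulVec (M : Matrix (Fin d) (Fin d) ℤ) (v : Fin d → ℤ) :
    castVec (M *ᵥ v) = matR M *ᵥ castVec v :=
  funext (RingHom.map_mulVec (Int.castRingHom ℝ) M v)

lemma castVec_dotProduct (v w : Fin d → ℤ) : castVec v ⬝ᵥ castVec w = ((v ⬝ᵥ w : ℤ) : ℝ) :=
  (RingHom.map_dotProduct (Int.castRingHom ℝ) v w).symm

lemma matR_transpose (R : Matrix (Fin d) (Fin d) ℤ) : matR Rᵀ = (matR R)ᵀ := rfl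

lemma matR_mul (R₁ R₂ : Matrix (Fin d) (Fin d) ℤ) : matR (R₁ * R₂) = matR R₁ * matR R₂ :=
  Matrix.map_mul (f := Int.castRingHom ℝ)

lemma isUnit_det_matR {R : Matrix (Fin d) (Fin d) ℤ} (hR : R.det ≠ 0) : IsUnit (matR R).det := by
  have hdet : (matR R).det = R.det := (RingHom.map_det (Int.castRingHom ℝ) R).symm
  rw [isUnit_iff_ne_zero, hdet]
  exact_mod_cast hR

noncomputable def mask (B : Finset (Fin d → ℤ)) (ξ : Fin d → ℝ) : ℂ :=
  ∑ b ∈ B, (𝐞 (ξ ⬝ᵥ castVec b) : ℂ)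

lemma mask_zero (B : Finset (Fin d → ℤ)) : mask B 0 = #B := by
  simp [mask]

lemma mask_add_castVec (B : Finset (Fin d → ℤ)) (ξ : Fin d → ℝ) (k : Fin d → ℤ) :
    mask B (ξ + castVec k) = mask B ξ := by
  refine sum_congr rfl fun b _ => ?_
  rw [add_dotProduct, castVec_dotProduct, AddChar.map_add_eq_mul,
    Real.fourierChar_apply' (_ : ℤ), Circle.exp_two_pi_mul_int, mul_one]

lemma mask_castVec (B : Finset (Fin d → ℤ)) (k : Fin d → ℤ) : mask B (castVec k) = #B := by
  simpa [mask_zero] using mask_add_castVec B 0 k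

lemma add_image_mulVec (B B' : Finset (Fin d → ℤ)) (M : Matrix (Fin d) (Fin d) ℤ) :
    B + B'.image (M *ᵥ ·) = (B ×ˢ B').image fun p => p.1 + M *ᵥ p.2 := by
  ext v
  simp only [Finset.mem_add, Finset.mem_image, exists_exists_and_eq_and, mem_product,
    Prod.exists]
  aesop

lemma card_add_image_mulVec {B B' : Finset (Fin d → ℤ)} {M : Matrix (Fin d) (Fin d) ℤ}
    (hinj : Set.InjOn (fun p : (Fin d → ℤ) × (Fin d → ℤ) => p.1 + M *ᵥ p.2) ↑(B ×ˢ B')) :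
    #(B + B'.image (M *ᵥ ·)) = #B * #B' := by
  rw [add_image_mulVec, card_image_of_injOn hinj, card_product]

lemma mask_add_image_mulVec {B B' : Finset (Fin d → ℤ)} {M : Matrix (Fin d) (Fin d) ℤ}
    (hinj : Set.InjOn (fun p : (Fin d → ℤ) × (Fin d → ℤ) => p.1 + M *ᵥ p.2) ↑(B ×ˢ B'))
    (ξ : Fin d → ℝ) :
    mask (B + B'.image (M *ᵥ ·)) ξ = mask B ξ * mask B' (ξ ᵥ* matR M) := by
  rw [mask, add_image_mulVec, sum_image hinj, sum_product, mask, mask, sum_mul_sum]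
  refine sum_congr rfl fun b _ => sum_congr rfl fun β _ => ?_
  rw [map_add, castVec_mulVec, dotProduct_add, dotProduct_mulVec, AddChar.map_add_eq_mul,
    Circle.coe_mul]

lemma hadamardMatrix_apply (R : Matrix (Fin d) (Fin d) ℤ) (B L : Finset (Fin d → ℤ))
    (b : B) (l : L) :
    hadamardMatrix R B L b l =
      ((1 / √(#B : ℝ) : ℝ) : ℂ) *
        𝐞 (-(castVec (l : Fin d → ℤ) ᵥ* (matR R)⁻¹ ⬝ᵥ castVec (b : Fin d → ℤ))) := by
  rw [hadamardMatrix, Real.fourierChar_apply, ← dotProduct_mulVec, dotProduct_comm, mul_neg]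
  rfl

lemma conjTranspose_hadamardMatrix_mul_apply (R : Matrix (Fin d) (Fin d) ℤ)
    (B L : Finset (Fin d → ℤ)) (l l' : L) :
    ((hadamardMatrix R B L)ᴴ * hadamardMatrix R B L) l l' =
      (#B : ℂ)⁻¹ * mask B (castVec ((l : Fin d → ℤ) - (l' : Fin d → ℤ)) ᵥ* (matR R)⁻¹) := by
  rw [mul_apply, mask, mul_sum, ← sum_coe_sort B]
  refine sum_congr rfl fun b _ => ?_
  have hsq : ((1 / √(#B : ℝ) : ℝ) : ℂ) * ((1 / √(#B : ℝ) : ℝ) : ℂ) = (#B : ℂ)⁻¹ := by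
    rw [← Complex.ofReal_mul, div_mul_div_comm, one_mul, Real.mul_self_sqrt (Nat.cast_nonneg _)]
    push_cast; ring
  rw [conjTranspose_apply, hadamardMatrix_apply, hadamardMatrix_apply, star_mul', ← hsq,
    Complex.star_def, Complex.conj_ofReal, Circle.starRingEnd_addChar, neg_neg, map_sub,
    sub_vecMul, sub_dotProduct, sub_eq_add_neg, AddChar.map_add_eq_mul, Circle.coe_mul]
  ring

lemma isHadamardTriple_iff {R : Matrix (Fin d) (Fin d) ℤ} {B L : Finset (Fin d → ℤ)} :
    IsHadamardTriple R B L ↔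
      #B = #L ∧ ∀ l ∈ L, ∀ l' ∈ L, l ≠ l' → mask B (castVec (l - l') ᵥ* (matR R)⁻¹) = 0 := by
  refine and_congr_right fun hcard => ?_
  rw [← Matrix.ext_iff]
  simp only [conjTranspose_hadamardMatrix_mul_apply, one_apply, Subtype.forall, Subtype.mk.injEq]
  refine forall₂_congr fun l hl => forall₂_congr fun l' _ => ?_
  have hB : (#B : ℂ) ≠ 0 := by rw [hcard]; exact_mod_cast (card_ne_zero_of_mem hl)
  by_cases h : l = l'
  · simp [h, mask_zero, hB]
  · simp [h, hB]

lemma hadamardMatrix_transpose {R : Matrix (Fin d) (Fin d) ℤ} {B L : Finset (Fin d → ℤ)}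
    (hcard : #B = #L) : hadamardMatrix Rᵀ L B = (hadamardMatrix R B L)ᵀ := by
  ext l b
  rw [transpose_apply, hadamardMatrix_apply, hadamardMatrix_apply, hcard,
    matR_transpose, ← transpose_nonsing_inv, vecMul_transpose,
    dotProduct_comm, ← dotProduct_mulVec]

namespace IsHadamardTriple

variable {R : Matrix (Fin d) (Fin d) ℤ} {B L : Finset (Fin d → ℤ)}

theorem transpose (h : IsHadamardTriple R B L) : IsHadamardTriple Rᵀ L B := by
  refine ⟨h.1.symm, ?_⟩
  have e : L ≃ B := Fintype.equivOfCardEq (by simpa using h.1.symm)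
  rw [hadamardMatrix_transpose h.1, conjTranspose_transpose_eq_transpose_conjTranspose,
    ← transpose_mul, (mul_eq_one_comm_of_equiv e).1 h.2, transpose_one]

theorem injOn_add_mulVec (h : IsHadamardTriple R B L) (hR : R.det ≠ 0)
    (B' : Finset (Fin d → ℤ)) :
    Set.InjOn (fun p : (Fin d → ℤ) × (Fin d → ℤ) => p.1 + R *ᵥ p.2) ↑(B ×ˢ B') := by
  rintro ⟨b, k⟩ hbk ⟨b', k'⟩ hbk' heq
  simp only [coe_product, Set.mem_prod, mem_coe] at hbk hbk' heq
  obtain rfl : b = b' := by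
    by_contra hne
    have hdiff : b - b' = R *ᵥ (k' - k) := by
      rw [mulVec_sub]; exact sub_eq_sub_iff_add_eq_add.2 (heq.trans (add_comm _ _))
    have hfreq : castVec (b - b') ᵥ* (matR Rᵀ)⁻¹ = castVec (k' - k) := by
      rw [hdiff, castVec_mulVec, matR_transpose, ← transpose_nonsing_inv, vecMul_transpose,
        mulVec_mulVec, nonsing_inv_mul _ (isUnit_det_matR hR), one_mulVec]
    have hmask := (isHadamardTriple_iff.1 h.transpose).2 b hbk.1 b' hbk'.1 hne
    rw [hfreq, mask_castVec, ← h.1, Nat.cast_eq_zero] at hmask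
    exact card_ne_zero_of_mem hbk.1 hmask
  have hker : R *ᵥ (k - k') = 0 := by rw [mulVec_sub, sub_eq_zero]; exact add_left_cancel heq
  refine Prod.ext rfl (sub_eq_zero.1 ?_)
  by_contra hne
  exact hR (exists_mulVec_eq_zero_iff.1 ⟨k - k', hne, hker⟩)

theorem mul {R₁ R₂ : Matrix (Fin d) (Fin d) ℤ} {B₁ L₁ B₂ L₂ : Finset (Fin d → ℤ)}
    (h₁ : IsHadamardTriple R₁ B₁ L₁) (h₂ : IsHadamardTriple R₂ B₂ L₂)
    (hR₁ : R₁.det ≠ 0) (hR₂ : R₂.det ≠ 0) :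
    IsHadamardTriple (R₁ * R₂) (B₁ + B₂.image (R₁ *ᵥ ·)) (L₂ + L₁.image (R₂ᵀ *ᵥ ·)) := by
  have hB := h₁.injOn_add_mulVec hR₁ B₂
  have hL := h₂.transpose.injOn_add_mulVec (by rwa [det_transpose]) L₁
  rw [isHadamardTriple_iff, card_add_image_mulVec hB, card_add_image_mulVec hL, h₁.1, h₂.1,
    mul_comm, add_image_mulVec]
  refine ⟨rfl, ?_⟩
  simp only [Finset.forall_mem_image, Prod.forall, mem_product, and_imp]
  intro l₂ l₁ hl₂ hl₁ l₂' l₁' hl₂' hl₁' hne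
  have hS₁ := isUnit_det_matR hR₁
  have hS₂ := isUnit_det_matR hR₂
  have hξ : castVec (l₂ + R₂ᵀ *ᵥ l₁ - (l₂' + R₂ᵀ *ᵥ l₁')) ᵥ* (matR (R₁ * R₂))⁻¹ =
      castVec (l₂ - l₂') ᵥ* (matR R₁ * matR R₂)⁻¹ + castVec (l₁ - l₁') ᵥ* (matR R₁)⁻¹ := by
    rw [add_sub_add_comm, ← mulVec_sub, map_add, castVec_mulVec, matR_transpose,
      mulVec_transpose, add_vecMul, matR_mul, Matrix.mul_inv_rev, vecMul_vecMul, ← mul_assoc,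
      mul_nonsing_inv _ hS₂, one_mul]
  have hξR₁ : (castVec (l₂ - l₂') ᵥ* (matR R₁ * matR R₂)⁻¹ + castVec (l₁ - l₁') ᵥ* (matR R₁)⁻¹)
      ᵥ* matR R₁ = castVec (l₂ - l₂') ᵥ* (matR R₂)⁻¹ + castVec (l₁ - l₁') := by
    rw [add_vecMul, vecMul_vecMul, vecMul_vecMul, Matrix.mul_inv_rev, mul_assoc,
      nonsing_inv_mul _ hS₁, mul_one, vecMul_one]
  rw [mask_add_image_mulVec hB, hξ, hξR₁, mask_add_castVec]
  by_cases hl : l₂ = l₂'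
  · subst hl
    have hne₁ : l₁ ≠ l₁' := by rintro rfl; exact hne rfl
    rw [sub_self, map_zero, zero_vecMul, zero_add,
      (isHadamardTriple_iff.1 h₁).2 _ hl₁ _ hl₁' hne₁, zero_mul]
  · rw [(isHadamardTriple_iff.1 h₂).2 _ hl₂ _ hl₂' hl, mul_zero]

end IsHadamardTriple

lemma iterSum_one (R : Matrix (Fin d) (Fin d) ℤ) (B : Finset (Fin d → ℤ)) :
    iterSum R B 1 = B := by
  rw [iterSum, iterSum, Finset.image_singleton, mulVec_zero, Finset.singleton_zero, add_zero]

lemma iterSum_succ' (R : Matrix (Fin d) (Fin d) ℤ) (B : Finset (Fin d → ℤ)) (n : ℕ) :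
    iterSum R B (n + 1) = iterSum R B n + B.image ((R ^ n) *ᵥ ·) := by
  induction n with
  | zero =>
    rw [iterSum_one, iterSum, pow_zero, Finset.singleton_zero, zero_add]
    simp only [one_mulVec, Finset.image_id']
  | succ n ih =>
    calc iterSum R B (n + 2)
        _ = B + (iterSum R B n + B.image ((R ^ n) *ᵥ ·)).image (R *ᵥ ·) := by rw [iterSum, ih]
        _ = B + (iterSum R B n).image (R *ᵥ ·) + B.image ((R ^ (n + 1)) *ᵥ ·) := by
          rw [← coe_mulVecLin, Finset.image_add, Finset.image_image, add_assoc]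
          simp [Function.comp_def, coe_mulVecLin, mulVec_mulVec, pow_succ']

lemma IsExpansive.det_ne_zero {R : Matrix (Fin d) (Fin d) ℤ} (hR : IsExpansive R) :
    R.det ≠ 0 := by
  intro h0
  have hroot : (R.map (Int.cast : ℤ → ℂ)).charpoly.IsRoot 0 := by
    have hdet : (R.map (Int.cast : ℤ → ℂ)).det = 0 := by
      rw [← Int.cast_zero, ← h0]; exact (RingHom.map_det (Int.castRingHom ℂ) R).symm
    rw [Polynomial.IsRoot, ← Polynomial.coeff_zero_eq_eval_zero]
    simpa [hdet] using (det_eq_sign_charpoly_coeff (R.map (Int.cast : ℤ → ℂ))).symm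
  have h := hR 0 hroot
  norm_num at h

end HadamardTriple

/-- If `(R,B,L)` is a Hadamard triple, then so is `(Rⁿ, 𝐁_n, 𝐋_n)` for
every `n ≥ 1`, where `𝐁_n = B + RB + ⋯ + R^{n-1}B` and `𝐋_n = L + RᵗL + ⋯ + (Rᵗ)^{n-1}L`. -/
theorem hadamard_triple_iterate
    {d : ℕ} (R : Matrix (Fin d) (Fin d) ℤ) (B L : Finset (Fin d → ℤ))
    (hR : IsExpansive R) (hH : IsHadamardTriple R B L) :
    ∀ n : ℕ, 1 ≤ n → IsHadamardTriple (R ^ n) (iterSum R B n) (iterSum R.transpose L n) := by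
  intro n hn
  induction n, hn using Nat.le_induction with
  | base => simpa only [pow_one, iterSum_one] using hH
  | succ n _ ih =>
    have hdet := hR.det_ne_zero
    rw [pow_succ', iterSum_succ' Rᵀ, ← transpose_pow]
    exact hH.mul ih hdet (by rw [det_pow]; exact pow_ne_zero n hdet)
end

section
/- Let 1 ≤ r < d, let μ be a compactly supported Borel probability measure on ℝ^d = ℝ^r × ℝ^{d-r}, let μ₁ be a compactly supported Borel probability measure on ℝ^r, and let (μ₂^{(s)})_{s∈ℝ^r} be a family of compactly supported Borel probability measures on ℝ^{d-r} such that for each x₂ ∈ ℝ^{d-r} the function s ↦ |μ̂₂^{(s)}(x₂)|² is μ₁-integrable. Assume that for every spectrum Λ₁ of μ₁ and every (x₁, x₂) ∈ ℝ^r × ℝ^{d-r}, one has ∑_{λ₁∈Λ₁} |μ̂(x₁+λ₁, x₂)|² = ∫ |μ̂₂^{(s)}(x₂)|² dμ₁(s). Suppose Γ ⊂ ℝ^{d-r} is a countable set that is a spectrum of μ₂^{(s)} for μ₁-almost every s, and that for each γ ∈ Γ, Λ_γ is a spectrum of μ₁. Then ⋃_{γ∈Γ} (Λ_γ × {γ})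 is a spectrum of μ. -/
open MeasureTheory Filter Set
open scoped ENNReal RealInnerProductSpace ComplexConjugate Pointwise Topology

noncomputable section Product

/-- The Fourier transform of a measure on the product `ℝ^r × ℝ^s`. -/
def muHatProd {r s : ℕ}
    (μ : MeasureTheory.Measure (EuclideanSpace ℝ (Fin r) × EuclideanSpace ℝ (Fin s)))
    (ξ : EuclideanSpace ℝ (Fin r) × EuclideanSpace ℝ (Fin s)) : ℂ :=
  ∫ x, Complex.exp
    (((-(2 * Real.pi * ((inner ℝ ξ.1 x.1 : ℝ) + (inner ℝ ξ.2 x.2 : ℝ))) : ℝ) : ℂ) * Complex.I) ∂μ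

/-- The exponential function `e_l(x) = e^{2πi⟨l,x⟩}` on the product `ℝ^r × ℝ^s`. -/
def expFnProd {r s : ℕ} (l x : EuclideanSpace ℝ (Fin r) × EuclideanSpace ℝ (Fin s)) : ℂ :=
  Complex.exp
    (((2 * Real.pi * ((inner ℝ l.1 x.1 : ℝ) + (inner ℝ l.2 x.2 : ℝ)) : ℝ) : ℂ) * Complex.I)

/-- `Λ` is a spectrum of a measure `μ` on the product `ℝ^r × ℝ^s`: it is countable and
`E(Λ)` is an orthonormal basis of `L²(μ)` (an orthonormal family which is maximal). -/
def IsSpectrumProd {r s : ℕ}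
    (μ : MeasureTheory.Measure (EuclideanSpace ℝ (Fin r) × EuclideanSpace ℝ (Fin s)))
    (Λ : Set (EuclideanSpace ℝ (Fin r) × EuclideanSpace ℝ (Fin s))) : Prop :=
  Λ.Countable ∧
  (∀ l ∈ Λ, ∫ x, expFnProd l x * conj (expFnProd l x) ∂μ = 1) ∧
  (∀ l ∈ Λ, ∀ l' ∈ Λ, l ≠ l' → ∫ x, expFnProd l x * conj (expFnProd l' x) ∂μ = 0) ∧
  (∀ f : MeasureTheory.Lp ℂ 2 μ,
    (∀ l ∈ Λ, ∫ x, f x * conj (expFnProd l x) ∂μ = 0) → f = 0)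

end Product

/-!
Write `F` for the Fourier transform of `μ` and `Λ = ⋃ γ ∈ Γ, Λ_γ × {γ}`. Taking `x = (-λ, 0)`
in the hypothesis on `μ` shows that each fibre `Λ_γ × {0}` is orthogonal for `μ`. By Bessel's
inequality the series on the left of that hypothesis then converge, and taking `x₂ = γ' - γ`
shows that points of different fibres are orthogonal, because `Γ` is orthogonal for almost every
`μ₂^{(s)}`. Summing the hypothesis over `γ ∈ Γ` and using Parseval's identity for `μ₂^{(s)}`
gives `∑_{λ ∈ Λ} |F(ξ + λ)|² = 1`. This is the Jorgensen–Pedersen criterion, and it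
forces `Λ` to be complete. The criterion needs only one analytic input: a finite measure is
determined by its Fourier transform.
-/

open BoundedContinuousFunction
open scoped FourierTransform InnerProductSpace

theorem eq_zero_of_tsum_eq_apply {ι : Type*} {f : ι → ℝ} (hf : ∀ k, 0 ≤ f k) {a : ℝ} (ha : a ≠ 0)
    {i j : ι} (hij : i ≠ j) (h : ∑' k, f k = a) (hi : f i = a) : f j = 0 := by
  classical
  have hs : Summable f := by
    by_contra hns
    exact ha (h ▸ tsum_eq_zero_of_not_summable hns)
  have := hs.sum_le_tsum {i, j} fun k _ ↦ hf k
  rw [Finset.sum_pair hij, h, hi] at this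
  exact le_antisymm (by linarith) (hf j)

theorem hasSum_of_tsum_ofReal_eq {ι : Type*} {f : ι → ℝ} (hf : ∀ i, 0 ≤ f i) {a : ℝ} (ha : 0 ≤ a)
    (h : ∑' i, ENNReal.ofReal (f i) = ENNReal.ofReal a) : HasSum f a := by
  convert ENNReal.hasSum_toReal (h ▸ ENNReal.ofReal_ne_top) using 1
  · ext i
    rw [ENNReal.toReal_ofReal (hf i)]
  · rw [← ENNReal.tsum_toReal_eq fun _ ↦ ENNReal.ofReal_ne_top, h, ENNReal.toReal_ofReal ha]

theorem Set.mem_biUnion_prod_singleton {α β : Type*} {Γ : Set β} {Λ : β → Set α} {m : α × β} :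
    m ∈ ⋃ γ ∈ Γ, Λ γ ×ˢ {γ} ↔ m.2 ∈ Γ ∧ m.1 ∈ Λ m.2 := by
  simp +contextual [and_comm]

theorem ENNReal.tsum_biUnion_prod_singleton {α β : Type*} (Γ : Set β) (Λ : β → Set α)
    (f : α × β → ℝ≥0∞) :
    ∑' m : ⋃ γ ∈ Γ, Λ γ ×ˢ {γ}, f m = ∑' γ : Γ, ∑' l : Λ γ, f (l, γ) := by
  have hind (m : α × β) : (⋃ γ ∈ Γ, Λ γ ×ˢ {γ}).indicator f m =
      Γ.indicator (fun γ ↦ (Λ γ).indicator (fun l ↦ f (l, γ)) m.1) m.2 := by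
    by_cases h2 : m.2 ∈ Γ <;> by_cases h1 : m.1 ∈ Λ m.2 <;> simp [Set.indicator, h1, h2]
  rw [tsum_subtype Γ (fun γ ↦ ∑' l : Λ γ, f (l, γ))]
  simp_rw [tsum_subtype, hind, ENNReal.tsum_prod', ENNReal.tsum_comm (α := α)]
  congr 1 with γ
  by_cases hγ : γ ∈ Γ
  · simp [hγ, ← tsum_subtype (Λ γ) fun l ↦ f (l, γ)]
  · simp [hγ]

section Hilbert

variable {𝕜 E ι : Type*} [RCLike 𝕜] [NormedAddCommGroup E] [InnerProductSpace 𝕜 E] {v : ι → E}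

theorem Orthonormal.norm_sub_sum_inner_smul_sq (hv : Orthonormal 𝕜 v) (x : E) (s : Finset ι) :
    ‖x - ∑ i ∈ s, ⟪v i, x⟫_𝕜 • v i‖ ^ 2 = ‖x‖ ^ 2 - ∑ i ∈ s, ‖⟪v i, x⟫_𝕜‖ ^ 2 := by
  set p := ∑ i ∈ s, ⟪v i, x⟫_𝕜 • v i
  have hperp : ⟪p, x - p⟫_𝕜 = 0 := by
    refine (sum_inner _ _ _).trans (Finset.sum_eq_zero fun i hi ↦ ?_)
    rw [inner_smul_left, inner_sub_right, hv.inner_right_sum _ hi, sub_self, mul_zero]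
  have hp : ‖p‖ ^ 2 = ∑ i ∈ s, ‖⟪v i, x⟫_𝕜‖ ^ 2 := by
    rw [← RCLike.ofReal_inj (K := 𝕜)]
    push_cast
    rw [← inner_self_eq_norm_sq_to_K, hv.inner_sum]
    exact Finset.sum_congr rfl fun i _ ↦ RCLike.conj_mul _
  have := norm_add_sq_eq_norm_sq_add_norm_sq_of_inner_eq_zero p (x - p) hperp
  rw [add_sub_cancel] at this
  linarith

/-- Equality in Bessel's inequality for `x` puts `x` in the closed span of `v`. -/
theorem Orthonormal.inner_eq_zero_of_hasSum_norm_inner_sq (hv : Orthonormal 𝕜 v) {x y : E}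
    (hx : HasSum (fun i ↦ ‖⟪v i, x⟫_𝕜‖ ^ 2) (‖x‖ ^ 2)) (hy : ∀ i, ⟪v i, y⟫_𝕜 = 0) :
    ⟪x, y⟫_𝕜 = 0 := by
  have hsq : Tendsto (fun s : Finset ι ↦ ‖x - ∑ i ∈ s, ⟪v i, x⟫_𝕜 • v i‖ ^ 2) atTop (𝓝 0) := by
    have := hx.const_sub (‖x‖ ^ 2)
    rw [sub_self] at this
    simpa only [hv.norm_sub_sum_inner_smul_sq, SummationFilter.unconditional_filter] using this
  have hlim : Tendsto (fun s : Finset ι ↦ x - ∑ i ∈ s, ⟪v i, x⟫_𝕜 • v i) atTop (𝓝 0) := by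
    rw [tendsto_zero_iff_norm_tendsto_zero]
    simpa using hsq.sqrt
  have hconst (s : Finset ι) : ⟪x - ∑ i ∈ s, ⟪v i, x⟫_𝕜 • v i, y⟫_𝕜 = ⟪x, y⟫_𝕜 := by
    simp [inner_sub_left, sum_inner, inner_smul_left, hy]
  have := hlim.inner (𝕜 := 𝕜) (tendsto_const_nhds (x := y))
  simp_rw [hconst, inner_zero_left] at this
  exact tendsto_nhds_unique tendsto_const_nhds this

theorem Orthonormal.hasSum_norm_inner_sq [CompleteSpace E] (hv : Orthonormal 𝕜 v)
    (hmax : ∀ y, (∀ i, ⟪v i, y⟫_𝕜 = 0) → y = 0) (x : E) :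
    HasSum (fun i ↦ ‖⟪v i, x⟫_𝕜‖ ^ 2) (‖x‖ ^ 2) := by
  have hsp : (Submodule.span 𝕜 (Set.range v))ᗮ = ⊥ := by
    refine (Submodule.eq_bot_iff _).2 fun y hy ↦ hmax y fun i ↦ ?_
    exact (Submodule.mem_orthogonal _ _).1 hy _ (Submodule.subset_span ⟨i, rfl⟩)
  have := ((HilbertBasis.mkOfOrthogonalEqBot hv hsp).hasSum_inner_mul_inner x x).mapL
    (RCLike.reCLM (K := 𝕜))
  rw [HilbertBasis.coe_mkOfOrthogonalEqBot, RCLike.reCLM_apply, inner_self_eq_norm_sq] at this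
  refine this.congr_fun fun i ↦ ?_
  rw [← inner_conj_symm x, RCLike.conj_mul]
  norm_cast

end Hilbert

theorem integral_withDensity_ofReal_eq {X : Type*} [MeasurableSpace X] {μ : Measure X}
    {f : X → ℝ} (hf : AEMeasurable f μ) (g : X → ℂ) :
    ∫ x, g x ∂μ.withDensity (fun x ↦ .ofReal (f x)) = ∫ x, ((max (f x) 0 : ℝ) : ℂ) * g x ∂μ := by
  simp only [integral_withDensity_eq_integral_toReal_smul₀ hf.ennreal_ofReal
    (.of_forall fun _ ↦ ENNReal.ofReal_lt_top), ENNReal.toReal_ofReal', Complex.real_smul]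

theorem MeasureTheory.Integrable.mul_boundedContinuousFunction {X : Type*} [TopologicalSpace X]
    [MeasurableSpace X] [OpensMeasurableSpace X] {μ : Measure X} {f : X → ℂ}
    (hf : Integrable f μ) (g : X →ᵇ ℂ) : Integrable (fun x ↦ f x * g x) μ :=
  hf.mul_bdd g.continuous.aestronglyMeasurable (.of_forall g.norm_coe_le_norm)

theorem fourierChar_mul_conj_fourierChar (a b : ℝ) :
    (𝐞 a : ℂ) * conj (𝐞 b : ℂ) = 𝐞 (-(b - a)) := by
  rw [Circle.starRingEnd_addChar, neg_sub, sub_eq_add_neg, AddChar.map_add_eq_mul, Circle.coe_mul]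

noncomputable section Pairing

variable {V W : Type*} [AddCommGroup V] [Module ℝ V] [MeasurableSpace V]
  [AddCommGroup W] [Module ℝ W] (L : V →ₗ[ℝ] W →ₗ[ℝ] ℝ)

def fourierStieltjes (μ : Measure V) (ξ : W) : ℂ := ∫ v, (𝐞 (-L v ξ) : ℂ) ∂μ

theorem fourierStieltjes_zero (μ : Measure V) [IsProbabilityMeasure μ] :
    fourierStieltjes L μ 0 = 1 := by
  simp [fourierStieltjes]

theorem integral_fourierChar_mul_conj (μ : Measure V) (l l' : W) :
    ∫ v, (𝐞 (L v l) : ℂ) * conj (𝐞 (L v l') : ℂ) ∂μ = fourierStieltjes L μ (l' - l) := by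
  simp_rw [fourierChar_mul_conj_fourierChar, ← map_sub]
  rfl

/-- `Λ` is a spectrum of `μ` for the characters `e^{2πi L(·, l)}`. For `innerPairing` and
`prodInnerPairing` (below) this is, definitionally, `IsSpectrum` and `IsSpectrumProd`. -/
def IsSpectrumFor (μ : Measure V) (Λ : Set W) : Prop :=
  Λ.Countable ∧
  (∀ l ∈ Λ, ∫ v, (𝐞 (L v l) : ℂ) * conj (𝐞 (L v l) : ℂ) ∂μ = 1) ∧
  (∀ l ∈ Λ, ∀ l' ∈ Λ, l ≠ l' → ∫ v, (𝐞 (L v l) : ℂ) * conj (𝐞 (L v l') : ℂ) ∂μ = 0) ∧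
  (∀ f : Lp ℂ 2 μ, (∀ l ∈ Λ, ∫ v, f v * conj (𝐞 (L v l) : ℂ) ∂μ = 0) → f = 0)

variable {L} in
theorem IsSpectrumFor.fourierStieltjes_sub_eq_zero {μ : Measure V} {Λ : Set W}
    (h : IsSpectrumFor L μ Λ) {l l' : W} (hl : l ∈ Λ) (hl' : l' ∈ Λ) (hne : l ≠ l') :
    fourierStieltjes L μ (l' - l) = 0 := by
  rw [← integral_fourierChar_mul_conj]
  exact h.2.2.1 l hl l' hl' hne

end Pairing

section Uniqueness

variable {V W : Type*} [AddCommGroup V] [Module ℝ V] [PseudoEMetricSpace V] [MeasurableSpace V]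
  [BorelSpace V] [CompleteSpace V] [SecondCountableTopology V]
  [AddCommGroup W] [Module ℝ W] [TopologicalSpace W]
  {L : V →ₗ[ℝ] W →ₗ[ℝ] ℝ} (hL : Continuous fun p : V × W ↦ L p.1 p.2) (hL' : ∀ v ≠ 0, L v ≠ 0)
  {μ : Measure V} [IsFiniteMeasure μ]

local notation "χ" => char Real.continuous_fourierChar hL

include hL' in
/-- The positive and negative parts of `u • μ` are finite measures with the same Fourier
transform, hence equal. -/
theorem ae_eq_zero_of_forall_integral_ofReal_mul_char_eq_zero {u : V → ℝ} (hu : Integrable u μ)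
    (h : ∀ w, ∫ v, (u v : ℂ) * χ w v ∂μ = 0) : u =ᵐ[μ] 0 := by
  have := isFiniteMeasure_withDensity_ofReal hu.2
  have := isFiniteMeasure_withDensity_ofReal hu.fun_neg.2
  have hofReal (g : V → ℝ) (hg : Integrable g μ) : Integrable (fun v ↦ (g v : ℂ)) μ := hg.ofReal
  have hposneg :
      μ.withDensity (fun v ↦ .ofReal (u v)) = μ.withDensity (fun v ↦ .ofReal (-u v)) := by
    refine ext_of_integral_char_eq Real.continuous_fourierChar Real.fourierChar_ne_one hL' hL
      fun w ↦ ?_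
    rw [integral_withDensity_ofReal_eq hu.1.aemeasurable,
      integral_withDensity_ofReal_eq hu.fun_neg.1.aemeasurable, ← sub_eq_zero,
      ← integral_sub ((hofReal _ hu.pos_part).mul_boundedContinuousFunction (χ w))
        ((hofReal _ hu.fun_neg.pos_part).mul_boundedContinuousFunction (χ w)), ← h w]
    congr 1 with v
    rw [← sub_mul, ← Complex.ofReal_sub, max_zero_sub_max_neg_zero_eq_self]
  rw [withDensity_eq_iff_of_sigmaFinite hu.1.aemeasurable.ennreal_ofReal
    hu.fun_neg.1.aemeasurable.ennreal_ofReal] at hposneg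
  filter_upwards [hposneg] with v hv
  have := congrArg ENNReal.toReal hv
  rw [ENNReal.toReal_ofReal', ENNReal.toReal_ofReal'] at this
  rw [Pi.zero_apply, ← max_zero_sub_max_neg_zero_eq_self (u v), this, sub_self]

include hL' in
theorem ae_eq_zero_of_forall_integral_mul_conj_char_eq_zero {f : V → ℂ} (hf : Integrable f μ)
    (h : ∀ w, ∫ v, f v * conj (χ w v) ∂μ = 0) : f =ᵐ[μ] 0 := by
  have hf₁ (w : W) : ∫ v, f v * χ w v ∂μ = 0 := by
    simpa [char_neg] using h (-w)
  have hf₂ (w : W) : ∫ v, conj (f v) * χ w v ∂μ = 0 := by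
    simpa only [← integral_conj, map_mul, Complex.conj_conj, map_zero] using congrArg conj (h w)
  have hfc : Integrable (fun v ↦ conj (f v)) μ :=
    RCLike.conjCLE.toContinuousLinearMap.integrable_comp hf
  have hre := ae_eq_zero_of_forall_integral_ofReal_mul_char_eq_zero hL hL' hf.re fun w ↦ by
    simp_rw [RCLike.re_to_complex, Complex.re_eq_add_conj, div_mul_eq_mul_div, add_mul,
      integral_div, integral_add (hf.mul_boundedContinuousFunction (χ w))
        (hfc.mul_boundedContinuousFunction (χ w)), hf₁, hf₂, add_zero, zero_div]
  have him := ae_eq_zero_of_forall_integral_ofReal_mul_char_eq_zero hL hL' hf.im fun w ↦ by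
    simp_rw [RCLike.im_to_complex, Complex.im_eq_sub_conj, div_mul_eq_mul_div, sub_mul,
      integral_div, integral_sub (hf.mul_boundedContinuousFunction (χ w))
        (hfc.mul_boundedContinuousFunction (χ w)), hf₁, hf₂, sub_zero, zero_div]
  filter_upwards [hre, him] with v hv_re hv_im
  exact Complex.ext hv_re hv_im

end Uniqueness

noncomputable section Characters

variable {V W : Type*} [AddCommGroup V] [Module ℝ V] [PseudoEMetricSpace V] [MeasurableSpace V]
  [BorelSpace V] [AddCommGroup W] [Module ℝ W] [TopologicalSpace W]
  {L : V →ₗ[ℝ] W →ₗ[ℝ] ℝ} (hL : Continuous fun p : V × W ↦ L p.1 p.2)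
  (μ : Measure V) [IsFiniteMeasure μ]

local notation "χ" => char Real.continuous_fourierChar hL

def charLp (w : W) : Lp ℂ 2 μ := toLp 2 μ ℂ (χ w)

theorem inner_charLp (w : W) (f : Lp ℂ 2 μ) :
    ⟪charLp hL μ w, f⟫_ℂ = ∫ v, f v * conj (𝐞 (L v w) : ℂ) ∂μ := by
  rw [L2.inner_def]
  refine integral_congr_ae ?_
  filter_upwards [coeFn_toLp 2 μ ℂ (χ w)] with v hv
  rw [charLp, hv, RCLike.inner_apply, char_apply, mul_comm]

theorem inner_charLp_charLp (w w' : W) :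
    ⟪charLp hL μ w, charLp hL μ w'⟫_ℂ = fourierStieltjes L μ (w - w') := by
  rw [inner_charLp, ← integral_fourierChar_mul_conj]
  refine integral_congr_ae ?_
  filter_upwards [coeFn_toLp 2 μ ℂ (χ w')] with v hv
  rw [charLp, hv, char_apply]

theorem norm_charLp [IsProbabilityMeasure μ] (w : W) : ‖charLp hL μ w‖ = 1 := by
  have hsq : ‖charLp hL μ w‖ ^ 2 = 1 := by
    rw [@norm_sq_eq_re_inner ℂ, inner_charLp_charLp, sub_self, fourierStieltjes_zero,
      RCLike.one_re]
  exact (pow_eq_one_iff_of_nonneg (norm_nonneg _) two_ne_zero).1 hsq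

theorem orthonormal_charLp [IsProbabilityMeasure μ] {ι : Type*} {u : ι → W}
    (hu : Pairwise fun i j ↦ fourierStieltjes L μ (u i - u j) = 0) :
    Orthonormal ℂ (charLp hL μ ∘ u) :=
  ⟨fun i ↦ norm_charLp hL μ (u i), fun _ _ hij ↦ (inner_charLp_charLp hL μ _ _).trans (hu hij)⟩

theorem eq_zero_of_forall_inner_charLp_eq_zero [CompleteSpace V] [SecondCountableTopology V]
    (hL' : ∀ v ≠ 0, L v ≠ 0) (f : Lp ℂ 2 μ) (hf : ∀ w, ⟪charLp hL μ w, f⟫_ℂ = 0) : f = 0 :=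
  Lp.eq_zero_iff_ae_eq_zero.2 <| ae_eq_zero_of_forall_integral_mul_conj_char_eq_zero hL hL'
    ((Lp.memLp f).integrable one_le_two) fun w ↦ (inner_charLp hL μ w f).symm.trans (hf w)

include hL in
theorem summable_norm_fourierStieltjes_sq [IsProbabilityMeasure μ] {ι : Type*} {u : ι → W}
    (hu : Pairwise fun i j ↦ fourierStieltjes L μ (u i - u j) = 0) (ξ : W) :
    Summable fun i ↦ ‖fourierStieltjes L μ (ξ + u i)‖ ^ 2 := by
  simpa [inner_charLp_charLp, add_comm ξ] using
    (orthonormal_charLp hL μ hu).inner_products_summable (charLp hL μ (-ξ))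

include hL in
theorem IsSpectrumFor.hasSum_norm_fourierStieltjes_sq [IsProbabilityMeasure μ] {Λ : Set W}
    (h : IsSpectrumFor L μ Λ) (ξ : W) :
    HasSum (fun l : Λ ↦ ‖fourierStieltjes L μ (ξ + l)‖ ^ 2) 1 := by
  have hON : Orthonormal ℂ (charLp hL μ ∘ ((↑) : Λ → W)) :=
    orthonormal_charLp hL μ fun i j hij ↦
      h.fourierStieltjes_sub_eq_zero j.2 i.2 fun hji ↦ hij (Subtype.ext hji.symm)
  have hmax (f : Lp ℂ 2 μ) (hf : ∀ l : Λ, ⟪charLp hL μ l, f⟫_ℂ = 0) : f = 0 :=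
    h.2.2.2 f fun l hl ↦ (inner_charLp hL μ l f).symm.trans (hf ⟨l, hl⟩)
  simpa [inner_charLp_charLp, norm_charLp, add_comm ξ] using
    hON.hasSum_norm_inner_sq hmax (charLp hL μ (-ξ))

include hL in
theorem isSpectrumFor_of_hasSum [IsProbabilityMeasure μ] [CompleteSpace V]
    [SecondCountableTopology V] (hL' : ∀ v ≠ 0, L v ≠ 0) {Λ : Set W} (hΛ : Λ.Countable)
    (horth : ∀ l ∈ Λ, ∀ l' ∈ Λ, l ≠ l' → fourierStieltjes L μ (l' - l) = 0)
    (hJP : ∀ ξ, HasSum (fun l : Λ ↦ ‖fourierStieltjes L μ (ξ + l)‖ ^ 2) 1) :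
    IsSpectrumFor L μ Λ := by
  refine ⟨hΛ, fun l _ ↦ ?_, fun l hl l' hl' hne ↦ ?_, fun f hf ↦ ?_⟩
  · rw [integral_fourierChar_mul_conj, sub_self, fourierStieltjes_zero]
  · rw [integral_fourierChar_mul_conj]
    exact horth l hl l' hl' hne
  have hON : Orthonormal ℂ (charLp hL μ ∘ ((↑) : Λ → W)) :=
    orthonormal_charLp hL μ fun i j hij ↦ horth j j.2 i i.2 fun hji ↦ hij (Subtype.ext hji.symm)
  refine eq_zero_of_forall_inner_charLp_eq_zero hL μ hL' f fun w ↦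
    hON.inner_eq_zero_of_hasSum_norm_inner_sq ?_ fun l ↦ (inner_charLp hL μ l f).trans (hf l l.2)
  simpa [inner_charLp_charLp, norm_charLp, ← sub_eq_neg_add] using hJP (-w)

end Characters

noncomputable section InnerPairing

variable (E F : Type*) [NormedAddCommGroup E] [InnerProductSpace ℝ E]
  [NormedAddCommGroup F] [InnerProductSpace ℝ F]

def innerPairing : E →ₗ[ℝ] E →ₗ[ℝ] ℝ := (innerₗ E).flip

def prodInnerPairing : E × F →ₗ[ℝ] E × F →ₗ[ℝ] ℝ :=
  (innerPairing E).compl₁₂ (LinearMap.fst ℝ E F) (LinearMap.fst ℝ E F) +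
    (innerPairing F).compl₁₂ (LinearMap.snd ℝ E F) (LinearMap.snd ℝ E F)

theorem continuous_innerPairing : Continuous fun p : E × E ↦ innerPairing E p.1 p.2 :=
  continuous_inner.comp continuous_swap

theorem continuous_prodInnerPairing :
    Continuous fun p : (E × F) × (E × F) ↦ prodInnerPairing E F p.1 p.2 :=
  (continuous_inner.comp (continuous_fst.comp continuous_snd |>.prodMk
    (continuous_fst.comp continuous_fst))).add
  (continuous_inner.comp (continuous_snd.comp continuous_snd |>.prodMk
    (continuous_snd.comp continuous_fst)))

theorem prodInnerPairing_ne_zero (x : E × F) (hx : x ≠ 0) : prodInnerPairing E F x ≠ 0 := by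
  intro h
  have hx' := LinearMap.congr_fun h x
  simp only [prodInnerPairing, innerPairing, flip_innerₗ, LinearMap.add_apply,
    LinearMap.compl₁₂_apply, LinearMap.fst_apply, LinearMap.snd_apply, innerₗ_apply_apply,
    inner_self_eq_norm_sq_to_K, Real.ringHom_apply, LinearMap.zero_apply] at hx'
  obtain ⟨h1, h2⟩ := (add_eq_zero_iff_of_nonneg (sq_nonneg _) (sq_nonneg _)).1 hx'
  exact hx (Prod.ext (by simpa using h1) (by simpa using h2))

end InnerPairing

theorem muHat_eq_fourierStieltjes {m : ℕ} (ν : Measure (EuclideanSpace ℝ (Fin m))) :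
    muHat ν = fourierStieltjes (innerPairing _) ν := by
  ext ξ
  refine integral_congr_ae (.of_forall fun x ↦ ?_)
  simp only [innerPairing, Real.fourierChar_apply, LinearMap.flip_apply, innerₗ_apply_apply]
  ring_nf

theorem muHatProd_eq_fourierStieltjes {r s : ℕ}
    (μ : Measure (EuclideanSpace ℝ (Fin r) × EuclideanSpace ℝ (Fin s))) :
    muHatProd μ = fourierStieltjes (prodInnerPairing _ _) μ := by
  ext ξ
  refine integral_congr_ae (.of_forall fun x ↦ ?_)
  simp only [prodInnerPairing, innerPairing, Real.fourierChar_apply, LinearMap.add_apply,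
    LinearMap.compl₁₂_apply, LinearMap.flip_apply, innerₗ_apply_apply, LinearMap.fst_apply,
    LinearMap.snd_apply]
  ring_nf

theorem isSpectrum_iff {m : ℕ} (ν : Measure (EuclideanSpace ℝ (Fin m)))
    (Λ : Set (EuclideanSpace ℝ (Fin m))) :
    IsSpectrum ν Λ ↔ IsSpectrumFor (innerPairing _) ν Λ := Iff.rfl

theorem isSpectrumProd_iff {r s : ℕ}
    (μ : Measure (EuclideanSpace ℝ (Fin r) × EuclideanSpace ℝ (Fin s)))
    (Λ : Set (EuclideanSpace ℝ (Fin r) × EuclideanSpace ℝ (Fin s))) :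
    IsSpectrumProd μ Λ ↔ IsSpectrumFor (prodInnerPairing _ _) μ Λ := Iff.rfl

section QuasiProduct

variable {r n : ℕ} {μ : Measure (EuclideanSpace ℝ (Fin r) × EuclideanSpace ℝ (Fin n))}
  [IsProbabilityMeasure μ] {μ₁ : Measure (EuclideanSpace ℝ (Fin r))} [IsProbabilityMeasure μ₁]
  {μ₂ : EuclideanSpace ℝ (Fin r) → Measure (EuclideanSpace ℝ (Fin n))}
  [∀ s, IsProbabilityMeasure (μ₂ s)]
  (hkey : ∀ Λ₁ : Set (EuclideanSpace ℝ (Fin r)), IsSpectrum μ₁ Λ₁ →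
    ∀ (x₁ : EuclideanSpace ℝ (Fin r)) (x₂ : EuclideanSpace ℝ (Fin n)),
      ∑' l : Λ₁, ‖muHatProd μ (x₁ + (l : EuclideanSpace ℝ (Fin r)), x₂)‖ ^ 2 =
        ∫ s, ‖muHat (μ₂ s) x₂‖ ^ 2 ∂μ₁)

include hkey in
theorem muHatProd_sub_eq_zero_of_mem_spectrum {Λ₁ : Set (EuclideanSpace ℝ (Fin r))}
    (hΛ₁ : IsSpectrum μ₁ Λ₁) {l l' : EuclideanSpace ℝ (Fin r)} (hl : l ∈ Λ₁) (hl' : l' ∈ Λ₁)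
    (hne : l ≠ l') : muHatProd μ (l' - l, 0) = 0 := by
  have h := hkey Λ₁ hΛ₁ (-l) 0
  simp only [muHat_eq_fourierStieltjes, fourierStieltjes_zero, norm_one, one_pow,
    integral_const, probReal_univ, smul_eq_mul, mul_one] at h
  have := eq_zero_of_tsum_eq_apply (fun _ ↦ sq_nonneg _) one_ne_zero
    (i := (⟨l, hl⟩ : Λ₁)) (j := ⟨l', hl'⟩) (by simpa using hne) h
    (by simp [muHatProd_eq_fourierStieltjes, Prod.mk_zero_zero, fourierStieltjes_zero])
  simpa [neg_add_eq_sub] using this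

variable (hint : ∀ x₂ : EuclideanSpace ℝ (Fin n),
  Integrable (fun s ↦ ‖muHat (μ₂ s) x₂‖ ^ 2) μ₁)

include hkey hint in
theorem tsum_ofReal_norm_muHatProd_sq {Λ₁ : Set (EuclideanSpace ℝ (Fin r))}
    (hΛ₁ : IsSpectrum μ₁ Λ₁) (x₁ : EuclideanSpace ℝ (Fin r)) (x₂ : EuclideanSpace ℝ (Fin n)) :
    ∑' l : Λ₁, ENNReal.ofReal (‖muHatProd μ (x₁ + l, x₂)‖ ^ 2) =
      ∫⁻ s, ENNReal.ofReal (‖muHat (μ₂ s) x₂‖ ^ 2) ∂μ₁ := by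
  have hsum : Summable fun l : Λ₁ ↦ ‖muHatProd μ (x₁ + l, x₂)‖ ^ 2 := by
    have := summable_norm_fourierStieltjes_sq (continuous_prodInnerPairing _ _) μ
      (u := fun l : Λ₁ ↦ ((l : EuclideanSpace ℝ (Fin r)), (0 : EuclideanSpace ℝ (Fin n))))
      (fun i j hij ↦ by
        simpa [muHatProd_eq_fourierStieltjes] using
          muHatProd_sub_eq_zero_of_mem_spectrum hkey hΛ₁ j.2 i.2 fun h ↦ hij (Subtype.ext h.symm))
      (x₁, x₂)
    simpa [muHatProd_eq_fourierStieltjes] using this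
  rw [← ENNReal.ofReal_tsum_of_nonneg (fun _ ↦ sq_nonneg _) hsum, hkey Λ₁ hΛ₁ x₁ x₂,
    ofReal_integral_eq_lintegral_ofReal (hint x₂) (.of_forall fun _ ↦ sq_nonneg _)]

variable {Γ : Set (EuclideanSpace ℝ (Fin n))} (hΓ : ∀ᵐ s ∂μ₁, IsSpectrum (μ₂ s) Γ)
  {Λfam : EuclideanSpace ℝ (Fin n) → Set (EuclideanSpace ℝ (Fin r))}
  (hfam : ∀ γ ∈ Γ, IsSpectrum μ₁ (Λfam γ))

include hkey hint hΓ hfam in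
theorem muHatProd_sub_eq_zero_of_mem_biUnion
    {m m' : EuclideanSpace ℝ (Fin r) × EuclideanSpace ℝ (Fin n)}
    (hm : m ∈ ⋃ γ ∈ Γ, Λfam γ ×ˢ {γ}) (hm' : m' ∈ ⋃ γ ∈ Γ, Λfam γ ×ˢ {γ}) (hne : m ≠ m') :
    muHatProd μ (m' - m) = 0 := by
  obtain ⟨l, γ⟩ := m
  obtain ⟨l', γ'⟩ := m'
  rw [Set.mem_biUnion_prod_singleton] at hm hm'
  rw [Prod.mk_sub_mk]
  rcases eq_or_ne γ γ' with rfl | hγ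
  · rw [sub_self]
    exact muHatProd_sub_eq_zero_of_mem_spectrum hkey (hfam γ hm.1) hm.2 hm'.2
      fun h ↦ hne (h ▸ rfl)
  · have hzero : ∫⁻ s, ENNReal.ofReal (‖muHat (μ₂ s) (γ' - γ)‖ ^ 2) ∂μ₁ = 0 := by
      refine lintegral_eq_zero_of_ae_eq_zero ?_
      filter_upwards [hΓ] with s hs
      rw [muHat_eq_fourierStieltjes,
        ((isSpectrum_iff _ _).1 hs).fourierStieltjes_sub_eq_zero hm.1 hm'.1 hγ]
      simp
    have hle := ENNReal.le_tsum (f := fun k : Λfam γ' ↦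
      ENNReal.ofReal (‖muHatProd μ (-l + k, γ' - γ)‖ ^ 2)) ⟨l', hm'.2⟩
    rw [tsum_ofReal_norm_muHatProd_sq hkey hint (hfam γ' hm'.1), hzero, nonpos_iff_eq_zero,
      ENNReal.ofReal_eq_zero] at hle
    simpa [neg_add_eq_sub] using hle

include hkey hint hΓ hfam in
theorem tsum_ofReal_norm_muHatProd_biUnion_sq (hΓc : Γ.Countable)
    (ξ : EuclideanSpace ℝ (Fin r) × EuclideanSpace ℝ (Fin n)) :
    ∑' m : ⋃ γ ∈ Γ, Λfam γ ×ˢ {γ}, ENNReal.ofReal (‖muHatProd μ (ξ + m)‖ ^ 2) = 1 := by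
  have := hΓc.to_subtype
  have hParseval : ∀ᵐ s ∂μ₁,
      ∑' γ : Γ, ENNReal.ofReal (‖muHat (μ₂ s) (ξ.2 + γ)‖ ^ 2) = 1 := by
    filter_upwards [hΓ] with s hs
    have := ((isSpectrum_iff _ _).1 hs).hasSum_norm_fourierStieltjes_sq
      (continuous_innerPairing (EuclideanSpace ℝ (Fin n))) (μ₂ s) ξ.2
    rw [muHat_eq_fourierStieltjes, ← ENNReal.ofReal_tsum_of_nonneg (fun _ ↦ sq_nonneg _)
      this.summable, this.tsum_eq, ENNReal.ofReal_one]
  calc ∑' m : ⋃ γ ∈ Γ, Λfam γ ×ˢ {γ}, ENNReal.ofReal (‖muHatProd μ (ξ + m)‖ ^ 2)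
      = ∑' γ : Γ, ∫⁻ s, ENNReal.ofReal (‖muHat (μ₂ s) (ξ.2 + γ)‖ ^ 2) ∂μ₁ := by
        rw [ENNReal.tsum_biUnion_prod_singleton Γ Λfam
          fun m ↦ ENNReal.ofReal (‖muHatProd μ (ξ + m)‖ ^ 2)]
        refine tsum_congr fun γ ↦ ?_
        rw [← tsum_ofReal_norm_muHatProd_sq hkey hint (hfam γ γ.2) ξ.1]
        simp only [Prod.add_def]
    _ = ∫⁻ s, ∑' γ : Γ, ENNReal.ofReal (‖muHat (μ₂ s) (ξ.2 + γ)‖ ^ 2) ∂μ₁ :=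
        (lintegral_tsum fun γ ↦ (hint _).1.aemeasurable.ennreal_ofReal).symm
    _ = 1 := by
        rw [lintegral_congr_ae hParseval, lintegral_one, measure_univ]

end QuasiProduct

theorem product_spectrum_general
    {d r : ℕ}
    (μ : MeasureTheory.Measure
      (EuclideanSpace ℝ (Fin r) × EuclideanSpace ℝ (Fin (d - r))))
    (hμ : MeasureTheory.IsProbabilityMeasure μ)
    (μ₁ : MeasureTheory.Measure (EuclideanSpace ℝ (Fin r)))
    (hμ₁ : MeasureTheory.IsProbabilityMeasure μ₁)
    (μ₂ : EuclideanSpace ℝ (Fin r) → MeasureTheory.Measure (EuclideanSpace ℝ (Fin (d - r))))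
    (hμ₂ : ∀ s, MeasureTheory.IsProbabilityMeasure (μ₂ s))
    (hint : ∀ x₂ : EuclideanSpace ℝ (Fin (d - r)),
      MeasureTheory.Integrable (fun s => ‖muHat (μ₂ s) x₂‖ ^ 2) μ₁)
    (hkey : ∀ Λ₁ : Set (EuclideanSpace ℝ (Fin r)), IsSpectrum μ₁ Λ₁ →
      ∀ (x₁ : EuclideanSpace ℝ (Fin r)) (x₂ : EuclideanSpace ℝ (Fin (d - r))),
        ∑' l : Λ₁, ‖muHatProd μ (x₁ + (l : EuclideanSpace ℝ (Fin r)), x₂)‖ ^ 2 =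
          ∫ s, ‖muHat (μ₂ s) x₂‖ ^ 2 ∂μ₁)
    (Γ : Set (EuclideanSpace ℝ (Fin (d - r)))) (hΓc : Γ.Countable)
    (hΓ : ∀ᵐ s ∂μ₁, IsSpectrum (μ₂ s) Γ)
    (Λfam : EuclideanSpace ℝ (Fin (d - r)) → Set (EuclideanSpace ℝ (Fin r)))
    (hfam : ∀ γ ∈ Γ, IsSpectrum μ₁ (Λfam γ)) :
    IsSpectrumProd μ (⋃ γ ∈ Γ, Λfam γ ×ˢ {γ}) := by
  have := hμ
  have := hμ₁
  have := hμ₂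
  rw [isSpectrumProd_iff]
  refine isSpectrumFor_of_hasSum (continuous_prodInnerPairing _ _) μ (prodInnerPairing_ne_zero _ _)
    (hΓc.biUnion fun γ hγ ↦ (hfam γ hγ).1.prod (Set.countable_singleton γ))
    (fun m hm m' hm' hne ↦ ?_) fun ξ ↦ ?_
  · rw [← muHatProd_eq_fourierStieltjes]
    exact muHatProd_sub_eq_zero_of_mem_biUnion hkey hint hΓ hfam hm hm' hne
  · refine hasSum_of_tsum_ofReal_eq (fun _ ↦ sq_nonneg _) zero_le_one ?_
    rw [ENNReal.ofReal_one, ← muHatProd_eq_fourierStieltjes]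
    exact tsum_ofReal_norm_muHatProd_biUnion_sq hkey hint hΓ hfam hΓc ξ

/-- Spectra of quasi-product measures: if `Γ` is a spectrum of
`μ₂^{(s)}` for `μ₁`-a.e. `s`, and for each `γ ∈ Γ` the set `Λ_γ` is a spectrum of `μ₁`,
then `⋃_{γ ∈ Γ} (Λ_γ × {γ})` is a spectrum of `μ`. -/
theorem product_spectrum
    {d r : ℕ} (hr1 : 1 ≤ r) (hrd : r < d)
    (μ : MeasureTheory.Measure
      (EuclideanSpace ℝ (Fin r) × EuclideanSpace ℝ (Fin (d - r))))
    (hμ : MeasureTheory.IsProbabilityMeasure μ)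
    (hμc : ∃ K, IsCompact K ∧ μ Kᶜ = 0)
    (μ₁ : MeasureTheory.Measure (EuclideanSpace ℝ (Fin r)))
    (hμ₁ : MeasureTheory.IsProbabilityMeasure μ₁)
    (hμ₁c : ∃ K, IsCompact K ∧ μ₁ Kᶜ = 0)
    (μ₂ : EuclideanSpace ℝ (Fin r) → MeasureTheory.Measure (EuclideanSpace ℝ (Fin (d - r))))
    (hμ₂ : ∀ s, MeasureTheory.IsProbabilityMeasure (μ₂ s))
    (hμ₂c : ∀ s, ∃ K, IsCompact K ∧ μ₂ s Kᶜ = 0)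
    (hint : ∀ x₂ : EuclideanSpace ℝ (Fin (d - r)),
      MeasureTheory.Integrable (fun s => ‖muHat (μ₂ s) x₂‖ ^ 2) μ₁)
    (hkey : ∀ Λ₁ : Set (EuclideanSpace ℝ (Fin r)), IsSpectrum μ₁ Λ₁ →
      ∀ (x₁ : EuclideanSpace ℝ (Fin r)) (x₂ : EuclideanSpace ℝ (Fin (d - r))),
        ∑' l : Λ₁, ‖muHatProd μ (x₁ + (l : EuclideanSpace ℝ (Fin r)), x₂)‖ ^ 2 =
          ∫ s, ‖muHat (μ₂ s) x₂‖ ^ 2 ∂μ₁)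
    (Γ : Set (EuclideanSpace ℝ (Fin (d - r)))) (hΓc : Γ.Countable)
    (hΓ : ∀ᵐ s ∂μ₁, IsSpectrum (μ₂ s) Γ)
    (Λfam : EuclideanSpace ℝ (Fin (d - r)) → Set (EuclideanSpace ℝ (Fin r)))
    (hfam : ∀ γ ∈ Γ, IsSpectrum μ₁ (Λfam γ)) :
    IsSpectrumProd μ (⋃ γ ∈ Γ, Λfam γ ×ˢ {γ}) :=
  product_spectrum_general μ hμ μ₁ hμ₁ μ₂ hμ₂ hint hkey Γ hΓc hΓ Λfam hfam
end
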